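/- arXiv:1104.1216 — 10 statements merged into one kernel-verified Lean document; each statement's English description precedes it below -/
import Mathlib

section
/- A continuous action of G on a compact Hausdorff space X is residually finite if and only if for every point x ∈ X, every finite set F ⊆ G, and every neighbourhood ε of the diagonal in X × X, there exist a finite set E, an action of G on E, and a map ζ : E → X such that x lies in the ε-neighbourhood of ζ(E) and (ζ(sz), sζ(z)) ∈ ε for all z ∈ E and s ∈ F. -/
/-- Residual finiteness of a continuous action of a discrete group on a compact
Hausdorff space (neighbourhood-of-the-diagonal formulation). -/
def IsRFAction {G X : Type*} [Group G] [TopologicalSpace X] (act : G → X → X) : Prop :=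
  ∀ (F : Finset G) (ε : Set (X × X)), IsOpen ε → (∀ x, (x, x) ∈ ε) →
    ∃ (E : Type) (_ : Fintype E) (σ : G → E → E),
      (∀ z, σ 1 z = z) ∧ (∀ s t z, σ (s * t) z = σ s (σ t z)) ∧
      ∃ ζ : E → X,
        (∀ x : X, ∃ z : E, (x, ζ z) ∈ ε) ∧
        ∀ (z : E), ∀ s ∈ F, (ζ (σ s z), act s (ζ z)) ∈ ε

/-!
Pointwise models glue to a global one: by compactness finitely many pointwise models have
images that together come `ε`-close to every point of `X`, and their disjoint union, acted on
componentwise, is again a finite model that is `ε`-approximately equivariant over `F`.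
-/

def sigmaAct {G ι : Type*} {E : ι → Type*} (σ : ∀ i, G → E i → E i) :
    G → (Σ i, E i) → (Σ i, E i) :=
  fun s p => ⟨p.1, σ p.1 s p.2⟩

section SigmaAct

variable {G ι : Type*} [Monoid G] {E : ι → Type*} {σ : ∀ i, G → E i → E i}

theorem sigmaAct_one (h : ∀ i z, σ i 1 z = z) (p : Σ i, E i) : sigmaAct σ 1 p = p := by
  simp [sigmaAct, h]

theorem sigmaAct_mul (h : ∀ i s t z, σ i (s * t) z = σ i s (σ i t z)) (s t : G)
    (p : Σ i, E i) : sigmaAct σ (s * t) p = sigmaAct σ s (sigmaAct σ t p) := by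
  simp [sigmaAct, h]

end SigmaAct

-- Indexed by `Fin n` rather than a `Finset X` so that the glued model lives in `Type`.
theorem CompactSpace.exists_fin_cover_of_isOpen {X : Type*} [TopologicalSpace X] [CompactSpace X]
    {ε : Set (X × X)} (hε : IsOpen ε) (c : X → X) (hc : ∀ x, (x, c x) ∈ ε) :
    ∃ (n : ℕ) (p : Fin n → X), ∀ y, ∃ i, (y, c (p i)) ∈ ε := by
  obtain ⟨t, ht⟩ := CompactSpace.elim_nhds_subcover (fun x => {y | (y, c x) ∈ ε})
    fun x => (hε.preimage (by fun_prop)).mem_nhds (hc x)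
  refine ⟨t.card, fun i => t.equivFin.symm i, fun y => ?_⟩
  obtain ⟨x, hx, hy⟩ : ∃ x ∈ t, (y, c x) ∈ ε := by
    have hy : y ∈ ⋃ x ∈ t, {y | (y, c x) ∈ ε} := ht ▸ Set.mem_univ y
    simpa using hy
  exact ⟨t.equivFin ⟨x, hx⟩, by simpa using hy⟩

theorem stmt1_general {G X : Type*} [Group G]
    [TopologicalSpace X] [CompactSpace X]
    (act : G → X → X) :
    IsRFAction act ↔
      ∀ (x : X) (F : Finset G) (ε : Set (X × X)), IsOpen ε → (∀ y, (y, y) ∈ ε) →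
        ∃ (E : Type) (_ : Fintype E) (σ : G → E → E),
          (∀ z, σ 1 z = z) ∧ (∀ s t z, σ (s * t) z = σ s (σ t z)) ∧
          ∃ ζ : E → X,
            (∃ z : E, (x, ζ z) ∈ ε) ∧
            ∀ (z : E), ∀ s ∈ F, (ζ (σ s z), act s (ζ z)) ∈ ε := by
  constructor
  · intro h x F ε hε hdiag
    obtain ⟨E, hE, σ, h1, h2, ζ, hdense, hequiv⟩ := h F ε hε hdiag
    exact ⟨E, hE, σ, h1, h2, ζ, hdense x, hequiv⟩
  · intro h F ε hε hdiag
    choose E _ σ h1 h2 ζ hnear hequiv using fun x => h x F ε hε hdiag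
    choose z hz using hnear
    obtain ⟨n, p, hp⟩ := CompactSpace.exists_fin_cover_of_isOpen hε (fun x => ζ x (z x)) hz
    refine ⟨Σ i, E (p i), inferInstance, sigmaAct fun i => σ (p i),
      sigmaAct_one fun i => h1 (p i), sigmaAct_mul fun i => h2 (p i),
      fun q => ζ (p q.1) q.2, fun y => ?_, fun q s hs => hequiv _ q.2 s hs⟩
    obtain ⟨i, hi⟩ := hp y
    exact ⟨⟨i, z (p i)⟩, hi⟩

/-- A continuous action on a compact Hausdorff space is residually finite iff for every
point `x`, finite `F ⊆ G`, and neighbourhood `ε` of the diagonal there is a finite model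
whose image comes `ε`-close to `x` and which is `ε`-approximately equivariant over `F`. -/
theorem stmt1 {G X : Type*} [Group G]
    [TopologicalSpace X] [CompactSpace X] [T2Space X]
    (act : G → X → X)
    (hone : ∀ x, act 1 x = x)
    (hmul : ∀ s t x, act (s * t) x = act s (act t x))
    (hcont : ∀ s, Continuous (act s)) :
    IsRFAction act ↔
      ∀ (x : X) (F : Finset G) (ε : Set (X × X)), IsOpen ε → (∀ y, (y, y) ∈ ε) →
        ∃ (E : Type) (_ : Fintype E) (σ : G → E → E),
          (∀ z, σ 1 z = z) ∧ (∀ s t z, σ (s * t) z = σ s (σ t z)) ∧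
          ∃ ζ : E → X,
            (∃ z : E, (x, ζ z) ∈ ε) ∧
            ∀ (z : E), ∀ s ∈ F, (ζ (σ s z), act s (ζ z)) ∈ ε :=
  stmt1_general act
end

section
/- If G is a residually finite group and X is a compact Hausdorff space, then the Bernoulli shift action of G on X^G given by (s·x)(t) = x(s⁻¹t) is residually finite as a dynamical system. -/
/-!
Only finitely many coordinates `D ⊆ G` and one entourage `W` of `X` matter for a neighbourhood
of the diagonal of `X^G`, and `X` has a finite `W`-net `a : Fin n → X`. Pick a finite quotient
`π : G →* H` that is injective on `D`. The Bernoulli shift of `G` on `(Fin n)^H`, acting through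
`π`, is then a finite model: `ζ f t = a (f (π t))` intertwines the two shifts exactly, and since
`π` separates `D`, any `x ∈ X^G` is `W`-close on `D` to some `ζ f`.
-/

open scoped Uniformity Pointwise

/-- A group is residually finite if every nonidentity element is detected by a
homomorphism to a finite group. -/
def IsResiduallyFiniteGroup (G : Type*) [Group G] : Prop :=
  ∀ g : G, g ≠ 1 → ∃ (H : Type) (_ : Group H) (_ : Fintype H) (π : G →* H), π g ≠ 1

theorem IsResiduallyFiniteGroup.exists_monoidHom_ne_one {G : Type*} [Group G]
    (hG : IsResiduallyFiniteGroup G) (S : Finset G) :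
    ∃ (H : Type) (_ : Group H) (_ : Fintype H) (π : G →* H), ∀ g ∈ S, g ≠ 1 → π g ≠ 1 := by
  classical
  induction S using Finset.induction_on with
  | empty => exact ⟨PUnit, inferInstance, inferInstance, 1, by simp⟩
  | insert a S _ ih =>
    obtain ⟨H, _, _, π, hπ⟩ := ih
    by_cases ha : a = 1
    · refine ⟨H, inferInstance, inferInstance, π, fun g hg hg1 => ?_⟩
      obtain rfl | hg := Finset.mem_insert.1 hg
      exacts [(hg1 ha).elim, hπ g hg hg1]
    · obtain ⟨H', _, _, π', hπ'⟩ := hG a ha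
      refine ⟨H × H', inferInstance, inferInstance, π.prod π', fun g hg hg1 h => ?_⟩
      obtain rfl | hg := Finset.mem_insert.1 hg
      exacts [hπ' (congrArg Prod.snd h), hπ g hg hg1 (congrArg Prod.fst h)]

theorem IsResiduallyFiniteGroup.exists_monoidHom_injOn {G : Type*} [Group G]
    (hG : IsResiduallyFiniteGroup G) (D : Finset G) :
    ∃ (H : Type) (_ : Group H) (_ : Fintype H) (π : G →* H), Set.InjOn π D := by
  classical
  obtain ⟨H, _, _, π, hπ⟩ := hG.exists_monoidHom_ne_one (D * D⁻¹)
  refine ⟨H, inferInstance, inferInstance, π, fun s hs t ht hst => ?_⟩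
  by_contra hne
  refine hπ (s * t⁻¹) (Finset.mul_mem_mul hs (Finset.inv_mem_inv ht)) ?_ ?_
  · exact fun h => hne (mul_inv_eq_one.mp h)
  · rw [map_mul, map_inv, hst, mul_inv_cancel]

theorem Pi.exists_finset_forall_mem_of_mem_uniformity {ι X : Type*} [UniformSpace X]
    {ε : Set ((ι → X) × (ι → X))} (hε : ε ∈ 𝓤 (ι → X)) :
    ∃ D : Finset ι, ∃ W ∈ 𝓤 X, ∀ x y : ι → X, (∀ t ∈ D, (x t, y t) ∈ W) → (x, y) ∈ ε := by
  rw [Pi.uniformity, Filter.mem_iInf'] at hε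
  obtain ⟨I, hI, V, hV, -, rfl, -⟩ := hε
  choose U hU hUV using fun i => Filter.mem_comap.mp (hV i)
  refine ⟨hI.toFinset, ⋂ i ∈ I, U i, (Filter.biInter_mem hI).2 fun i _ => hU i,
    fun x y hxy => Set.mem_iInter₂.2 fun i hi => hUV i ?_⟩
  exact Set.mem_iInter₂.1 (hxy i (hI.mem_toFinset.2 hi)) i hi

theorem exists_fin_net_of_mem_uniformity {X : Type*} [UniformSpace X] [CompactSpace X]
    {W : Set (X × X)} (hW : W ∈ 𝓤 X) : ∃ (n : ℕ) (a : Fin n → X), ∀ x, ∃ i, (x, a i) ∈ W := by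
  obtain ⟨t, ht, hcover⟩ := isCompact_univ.totallyBounded W hW
  obtain ⟨n, a, -, rfl⟩ := ht.fin_param
  exact ⟨n, a, fun x => by simpa using hcover (Set.mem_univ x)⟩

/-- For a residually finite group `G` and a compact Hausdorff space `X`, the Bernoulli
shift action of `G` on `X^G`, `(s • x)(t) = x(s⁻¹ t)`, is a residually finite action. -/
theorem stmt2 {G X : Type*} [Group G] [TopologicalSpace X] [CompactSpace X] [T2Space X]
    (hG : IsResiduallyFiniteGroup G) :
    IsRFAction (X := G → X) (fun s x t => x (s⁻¹ * t)) := by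
  classical
  let : UniformSpace X := uniformSpaceOfCompactR1
  intro F ε hεo hεd
  have hε : ε ∈ 𝓤 (G → X) := by
    rw [← nhdsSet_diagonal_eq_uniformity]
    exact hεo.mem_nhdsSet.2 (Set.diagonal_subset_iff.2 hεd)
  obtain ⟨D, W, hW, hDW⟩ := Pi.exists_finset_forall_mem_of_mem_uniformity hε
  obtain ⟨n, a, ha⟩ := exists_fin_net_of_mem_uniformity hW
  choose near hnear using ha
  obtain ⟨H, _, _, π, hπ⟩ := hG.exists_monoidHom_injOn D
  refine ⟨H → Fin n, inferInstance, fun s f h => f ((π s)⁻¹ * h), fun f => by simp,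
    fun s t f => by simp [mul_assoc], fun f t => a (f (π t)), fun x => ?_, fun f s _ => ?_⟩
  · refine ⟨near ∘ x ∘ Function.invFunOn π D, hDW _ _ fun t ht => ?_⟩
    simp only [Function.comp_apply, hπ.leftInvOn_invFunOn ht]
    exact hnear (x t)
  · simp only [map_mul, map_inv]
    exact hεd _
end

section
/- Let G act minimally and continuously on a zero-dimensional compact metrizable space X. Then the following are equivalent: (1) there is a G-invariant Borel probability measure on X; (2) X is completely (G, clopen)-nonparadoxical; (3) there is a nonempty clopen subset of X which is completely (G, clopen)-nonparadoxical. -/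
open MeasureTheory

/-- `A` is `(G, S, k, l)`-paradoxical: there are `A₁, …, Aₙ ∈ S` and `s₁, …, sₙ ∈ G` with
`∑ᵢ 1_{Aᵢ} ≥ k·1_A` and `∑ᵢ 1_{sᵢAᵢ} ≤ l·1_A` pointwise. -/
def IsParadoxical {G X : Type*} (act : G → X → X) (S : Set (Set X)) (A : Set X)
    (k l : ℕ) : Prop :=
  ∃ (n : ℕ) (As : Fin n → Set X) (ss : Fin n → G),
    (∀ i, As i ∈ S) ∧
    (∀ x ∈ A, k ≤ Nat.card {i : Fin n // x ∈ As i}) ∧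
    (∀ x ∈ A, Nat.card {i : Fin n // x ∈ act (ss i) '' As i} ≤ l) ∧
    (∀ x, x ∉ A → ∀ i, x ∉ act (ss i) '' As i)

/-- `A` is completely `(G, S)`-nonparadoxical if it is not `(G, S, k, l)`-paradoxical
for any integers `k > l > 0`. -/
def CompletelyNonparadoxical {G X : Type*} (act : G → X → X) (S : Set (Set X))
    (A : Set X) : Prop :=
  ∀ k l : ℕ, 0 < l → l < k → ¬ IsParadoxical act S A k l

/-!
An invariant probability measure turns a paradoxical decomposition of `A` into
`k • μ A ≤ l • μ A`. Conversely, if a nonempty clopen set `A` is completely nonparadoxical, then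
no real combination `h` of coboundaries `1_U - 1_{g • U}` satisfies `τ • 1_A ≤ h` with `τ > 0`.
Hence the functional `c • 1_A + h ↦ c` is well defined and positive, and it extends (M. Riesz) to
a positive functional on locally constant functions that vanishes on coboundaries. On clopen sets
this is an invariant finitely additive measure, and compactness makes it σ-additive.
-/

open Set Pointwise
open scoped ENNReal

theorem CompletelyNonparadoxical.nonempty {G X : Type*} {act : G → X → X} {S : Set (Set X)}
    {A : Set X} (h : CompletelyNonparadoxical act S A) : A.Nonempty := by
  refine nonempty_iff_ne_empty.2 fun hA => h 2 1 one_pos one_lt_two ?_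
  subst hA
  exact ⟨0, Fin.elim0, Fin.elim0, fun i => i.elim0, by simp, by simp, by simp⟩

section Indicator

variable {X ι κ : Type*}

theorem indicator_one_nonneg (U : Set X) : 0 ≤ U.indicator (1 : X → ℝ) :=
  fun _ => indicator_nonneg (fun _ _ => zero_le_one) _

theorem indicator_one_le_one (U : Set X) : U.indicator (1 : X → ℝ) ≤ 1 :=
  indicator_le_self' fun _ _ => zero_le_one

theorem abs_sub_indicator_one_le_one (U V : Set X) (x : X) :
    |U.indicator (1 : X → ℝ) x - V.indicator 1 x| ≤ 1 :=
  abs_sub_le_of_nonneg_of_le (indicator_one_nonneg U x) (indicator_one_le_one U x)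
    (indicator_one_nonneg V x) (indicator_one_le_one V x)

theorem sum_indicator_one_apply {R : Type*} [AddCommMonoidWithOne R] [Fintype ι]
    (C : ι → Set X) (x : X) :
    ∑ i, (C i).indicator (1 : X → R) x = Nat.card {i // x ∈ C i} := by
  classical
  rw [Nat.card_eq_fintype_card, Fintype.card_subtype, Finset.natCast_card_filter]
  simp only [indicator_apply, Pi.one_apply]

theorem one_le_sum_indicator_of_subset_iUnion [Fintype ι] {U : ι → Set X}
    (hU : univ ⊆ ⋃ i, U i) : (1 : X → ℝ) ≤ ∑ i, (U i).indicator 1 := by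
  intro x
  obtain ⟨i, hx⟩ := mem_iUnion.1 (hU (mem_univ x))
  calc (1 : X → ℝ) x = (U i).indicator 1 x := (indicator_of_mem hx _).symm
    _ ≤ ∑ j, (U j).indicator (1 : X → ℝ) x :=
      Finset.single_le_sum (fun j _ => indicator_one_nonneg (U j) x) (Finset.mem_univ i)
    _ = _ := (Finset.sum_apply x _ _).symm

variable [TopologicalSpace X]

theorem exists_clopen_partition_subordinate {V : Set X} (hV : IsClopen V) {E : κ → Set X}
    (hE : ∀ j, IsClopen (E j)) (T : Finset κ) (hVT : V ⊆ ⋃ j ∈ T, E j) :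
    ∃ D : κ → Set X, (∀ j, IsClopen (D j)) ∧ (∀ j, D j ⊆ E j) ∧
      ∑ j ∈ T, (D j).indicator 1 = V.indicator (1 : X → ℝ) := by
  classical
  induction T using Finset.induction_on generalizing V with
  | empty =>
    refine ⟨fun _ => ∅, fun _ => isClopen_empty, fun _ => empty_subset _, ?_⟩
    simp [subset_empty_iff.1 (by simpa using hVT)]
    rfl
  | insert b T hb ih =>
    obtain ⟨D, hD, hDE, hsum⟩ := ih (hV.diff (hE b)) fun x ⟨hxV, hxb⟩ => by
      simpa [hxb] using hVT hxV
    refine ⟨Function.update D b (V ∩ E b), fun j => ?_, fun j => ?_, ?_⟩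
    · rcases eq_or_ne j b with rfl | hj
      · simpa using hV.inter (hE j)
      · simpa [hj] using hD j
    · rcases eq_or_ne j b with rfl | hj
      · simp
      · simpa [hj] using hDE j
    · rw [Finset.sum_insert hb, Function.update_self,
        Finset.sum_congr rfl fun j hj => by rw [Function.update_of_ne (ne_of_mem_of_not_mem hj hb)],
        hsum]
      ext x
      by_cases hx : x ∈ E b <;> simp [indicator_apply, hx]

/-- The `V i` are split one at a time, each greedily along the capacity of the `E j` that is
still free. -/
theorem exists_clopen_refinement [Fintype κ] {V : ι → Set X} {E : κ → Set X}
    (hV : ∀ i, IsClopen (V i)) (hE : ∀ j, IsClopen (E j)) (s : Finset ι)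
    (h : ∑ i ∈ s, (V i).indicator 1 ≤ ∑ j, (E j).indicator (1 : X → ℝ)) :
    ∃ D : ι → κ → Set X, (∀ i j, IsClopen (D i j)) ∧
      (∀ i ∈ s, ∑ j, (D i j).indicator 1 = (V i).indicator (1 : X → ℝ)) ∧
      ∀ j, ∑ i ∈ s, (D i j).indicator 1 ≤ (E j).indicator (1 : X → ℝ) := by
  classical
  induction s using Finset.induction_on generalizing E with
  | empty =>
    exact ⟨fun _ _ => ∅, fun _ _ => isClopen_empty, by simp,
      fun j => by simpa using indicator_one_nonneg (E j)⟩
  | insert a s ha ih =>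
    rw [Finset.sum_insert ha] at h
    have hVa : V a ⊆ ⋃ j ∈ (Finset.univ : Finset κ), E j := by
      intro x hx
      have hx1 : (1 : ℝ) ≤ ∑ j, (E j).indicator 1 x := by
        have := h x
        simp only [Pi.add_apply, Finset.sum_apply, indicator_of_mem hx, Pi.one_apply] at this
        linarith [Finset.sum_nonneg fun i (_ : i ∈ s) => indicator_one_nonneg (V i) x]
      obtain ⟨j, -, hj⟩ := Finset.exists_ne_zero_of_sum_ne_zero (by linarith : _ ≠ (0 : ℝ))
      simpa using ⟨j, (indicator_apply_ne_zero.1 hj).1⟩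
    obtain ⟨Da, hDa, hDaE, hDasum⟩ := exists_clopen_partition_subordinate (hV a) hE _ hVa
    have hfree : ∀ j, (E j \ Da j).indicator (1 : X → ℝ) =
        (E j).indicator 1 - (Da j).indicator 1 := fun j => indicator_sdiff (hDaE j) 1
    obtain ⟨D, hD, hrow, hcol⟩ := ih (E := fun j => E j \ Da j) (fun j => (hE j).diff (hDa j)) <| by
      simp only [hfree, Finset.sum_sub_distrib, hDasum]
      exact le_sub_iff_add_le'.2 h
    refine ⟨Function.update D a Da, fun i j => ?_, fun i hi => ?_, fun j => ?_⟩
    · rcases eq_or_ne i a with rfl | hi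
      · simpa using hDa j
      · simpa [hi] using hD i j
    · rcases Finset.mem_insert.1 hi with rfl | hi
      · simpa using hDasum
      · simpa [ne_of_mem_of_not_mem hi ha] using hrow i hi
    · rw [Finset.sum_insert ha, Function.update_self,
        Finset.sum_congr rfl fun i hi => by rw [Function.update_of_ne (ne_of_mem_of_not_mem hi ha)]]
      have := hcol j
      rw [hfree] at this
      exact le_sub_iff_add_le'.1 this

end Indicator

theorem completelyNonparadoxical_of_measure {G X : Type*} [Group G] [MulAction G X]
    [MeasurableSpace X] [MeasurableConstSMul G X] {S : Set (Set X)}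
    (hS : ∀ U ∈ S, MeasurableSet U) (μ : Measure X) [SMulInvariantMeasure G X μ] {A : Set X}
    (hA : MeasurableSet A) (hμA : μ A ≠ 0) (hμA' : μ A ≠ ∞) :
    CompletelyNonparadoxical (fun (g : G) (x : X) => g • x) S A := by
  rintro k l - hlk ⟨n, C, s, hC, hkC, hCl, hout⟩
  have hsum : ∀ D : Fin n → Set X, (∀ i, MeasurableSet (D i)) →
      ∫⁻ x, (Nat.card {i // x ∈ D i} : ℝ≥0∞) ∂μ = ∑ i, μ (D i) := fun D hD => by
    simp_rw [← sum_indicator_one_apply]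
    rw [lintegral_finsetSum _ fun i _ => measurable_one.indicator (hD i)]
    exact Finset.sum_congr rfl fun i _ => lintegral_indicator_one (hD i)
  have hmul : ∀ m : ℕ, ∫⁻ x, m * A.indicator 1 x ∂μ = m * μ A := fun m => by
    rw [lintegral_const_mul _ (measurable_one.indicator hA), lintegral_indicator_one hA]
  have hk : k * μ A ≤ ∑ i, μ (C i) := by
    rw [← hmul, ← hsum C fun i => hS _ (hC i)]
    refine lintegral_mono fun x => ?_
    by_cases hx : x ∈ A
    · simpa [hx] using hkC x hx
    · simp [hx]
  have hl : ∑ i, μ (s i • C i) ≤ l * μ A := by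
    rw [← hmul, ← hsum _ fun i => (hS _ (hC i)).const_smul (s i)]
    refine lintegral_mono fun x => ?_
    by_cases hx : x ∈ A
    · simpa [hx] using hCl x hx
    · have : IsEmpty {i // x ∈ s i • C i} := ⟨fun i => hout x hx i.1 i.2⟩
      simp [hx]
  have hkl : k * μ A ≤ l * μ A := by simpa only [measure_smul] using hk.trans (by simpa using hl)
  exact absurd ((ENNReal.mul_le_mul_iff_left hμA hμA').1 hkl) (by exact_mod_cast hlk.not_ge)

section Subequivalence

variable {G X : Type*} [Group G] [MulAction G X]

theorem indicator_smul_set_one_apply (g : G) (U : Set X) (x : X) :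
    (g • U).indicator (1 : X → ℝ) x = U.indicator 1 (g⁻¹ • x) := by
  classical
  simp [indicator_apply, mem_smul_set_iff_inv_smul_mem]

variable [TopologicalSpace X]

theorem IsClopen.smul [ContinuousConstSMul G X] {U : Set X} (hU : IsClopen U) (g : G) :
    IsClopen (g • U) :=
  ⟨hU.isClosed.smul g, hU.isOpen.smul g⟩

variable (G) in
/-- The subequivalence `f ≾ g` of the type semigroup, for real-valued functions instead of
formal sums of clopen sets. -/
def Subequiv (f g : X → ℝ) : Prop :=
  ∃ (ι : Type) (_ : Fintype ι) (C : ι → Set X) (s : ι → G), (∀ i, IsClopen (C i)) ∧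
    f ≤ ∑ i, (C i).indicator 1 ∧ ∑ i, (s i • C i).indicator 1 ≤ g

theorem subequiv_sum_indicator {ι : Type} [Fintype ι] {C : ι → Set X} (hC : ∀ i, IsClopen (C i))
    (s : ι → G) : Subequiv G (∑ i, (C i).indicator 1) (∑ i, (s i • C i).indicator 1) :=
  ⟨ι, _, C, s, hC, le_rfl, le_rfl⟩

theorem subequiv_indicator_self {U : Set X} (hU : IsClopen U) :
    Subequiv G (U.indicator 1) (U.indicator 1) := by
  simpa using subequiv_sum_indicator (fun _ : Unit => hU) (fun _ => (1 : G))

namespace Subequiv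

variable {f f' g g' h : X → ℝ}

theorem mono (hfg : Subequiv G f g) (hf : f' ≤ f) (hg : g ≤ g') : Subequiv G f' g' :=
  let ⟨ι, _, C, s, hC, hfC, hCg⟩ := hfg
  ⟨ι, _, C, s, hC, hf.trans hfC, hCg.trans hg⟩

theorem add (h₁ : Subequiv G f g) (h₂ : Subequiv G f' g') : Subequiv G (f + f') (g + g') := by
  obtain ⟨ι, _, C, s, hC, hfC, hCg⟩ := h₁
  obtain ⟨κ, _, C', s', hC', hfC', hCg'⟩ := h₂
  refine ⟨ι ⊕ κ, inferInstance, Sum.elim C C', Sum.elim s s', fun i => ?_, ?_, ?_⟩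
  · cases i <;> simp [hC, hC']
  · simpa [Fintype.sum_sum_type] using add_le_add hfC hfC'
  · simpa [Fintype.sum_sum_type] using add_le_add hCg hCg'

theorem nsmul (hfg : Subequiv G f g) (n : ℕ) : Subequiv G (n • f) (n • g) := by
  induction n with
  | zero =>
    simp only [zero_smul]
    exact (subequiv_indicator_self (G := G) isClopen_empty).mono (fun _ => by simp)
      (fun _ => by simp)
  | succ n ih => simpa only [succ_nsmul] using ih.add hfg

/-- The translates of the pieces of `f ≾ g` are cut along the pieces of `g ≾ h`, and each cut
piece is moved by the composite translation. -/
theorem trans [ContinuousConstSMul G X] (hfg : Subequiv G f g) (hgh : Subequiv G g h) :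
    Subequiv G f h := by
  obtain ⟨ι, _, C, s, hC, hfC, hCg⟩ := hfg
  obtain ⟨κ, _, E, t, hE, hgE, hEh⟩ := hgh
  obtain ⟨D, hD, hrow, hcol⟩ := exists_clopen_refinement (fun i => (hC i).smul (s i)) hE
    Finset.univ (hCg.trans hgE)
  refine ⟨ι × κ, inferInstance, fun p => (s p.1)⁻¹ • D p.1 p.2, fun p => t p.2 * s p.1,
    fun p => (hD _ _).smul _, fun x => ?_, fun x => ?_⟩
  · calc f x ≤ ∑ i, (C i).indicator 1 x := by simpa using hfC x
      _ = ∑ p : ι × κ, ((s p.1)⁻¹ • D p.1 p.2).indicator 1 x := by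
        rw [Fintype.sum_prod_type]
        refine Finset.sum_congr rfl fun i _ => ?_
        have := congrFun (hrow i (Finset.mem_univ i)) (s i • x)
        simp only [Finset.sum_apply, indicator_smul_set_one_apply, inv_inv, inv_smul_smul]
          at this ⊢
        exact this.symm
      _ = _ := by simp
  · calc _ = ∑ j, ∑ i, (D i j).indicator (1 : X → ℝ) ((t j)⁻¹ • x) := by
          rw [Finset.sum_apply, Fintype.sum_prod_type_right]
          simp [smul_smul, indicator_smul_set_one_apply]
      _ ≤ ∑ j, (t j • E j).indicator 1 x := by
          refine Finset.sum_le_sum fun j _ => ?_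
          simpa [indicator_smul_set_one_apply] using hcol j ((t j)⁻¹ • x)
      _ ≤ h x := by simpa using hEh x

end Subequiv

theorem isParadoxical_of_subequiv {A : Set X} {k l : ℕ}
    (h : Subequiv G (k • A.indicator 1) (l • A.indicator 1)) :
    IsParadoxical (fun (g : G) (x : X) => g • x) {U | IsClopen U} A k l := by
  obtain ⟨ι, _, C, s, hC, hAC, hCA⟩ := h
  let e := Fintype.equivFin ι
  have hcard : ∀ (P : ι → Set X) x,
      Nat.card {i : Fin (Fintype.card ι) // x ∈ P (e.symm i)} = Nat.card {i // x ∈ P i} :=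
    fun P x => Nat.card_congr (e.symm.subtypeEquiv fun _ => Iff.rfl)
  refine ⟨_, C ∘ e.symm, s ∘ e.symm, fun i => hC _, fun x hx => ?_, fun x hx => ?_,
    fun x hx i hxi => ?_⟩
  · have hk := hAC x
    simp only [Pi.smul_apply, indicator_of_mem hx, Finset.sum_apply, sum_indicator_one_apply,
      nsmul_eq_mul, Pi.one_apply, mul_one, Nat.cast_le] at hk
    exact hk.trans (hcard C x).ge
  · have hl := hCA x
    simp only [Pi.smul_apply, indicator_of_mem hx, Finset.sum_apply, sum_indicator_one_apply,
      nsmul_eq_mul, Pi.one_apply, mul_one, Nat.cast_le] at hl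
    exact (hcard (fun i => s i • C i) x).le.trans hl
  · have hempty := hCA x
    simp only [Pi.smul_apply, indicator_of_notMem hx, Finset.sum_apply, sum_indicator_one_apply,
      smul_zero, Nat.cast_nonpos] at hempty
    have : Nonempty {j // x ∈ s j • C j} := ⟨⟨e.symm i, hxi⟩⟩
    exact Nat.card_pos.ne' hempty

end Subequivalence

theorem Finset.sum_mul_le_sum_ceil_mul_add_card {ι : Type*} (s : Finset ι) (a b : ι → ℝ)
    (hb : ∀ i ∈ s, |b i| ≤ 1) : ∑ i ∈ s, a i * b i ≤ ∑ i ∈ s, ⌈a i⌉ * b i + s.card := by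
  have hterm : ∀ i ∈ s, a i * b i ≤ ⌈a i⌉ * b i + 1 := fun i hi => by
    have hceil : |a i - ⌈a i⌉| ≤ 1 :=
      abs_le.2 ⟨by linarith [Int.ceil_lt_add_one (a i)], by linarith [Int.le_ceil (a i)]⟩
    have := (le_abs_self _).trans <| (abs_mul (a i - ⌈a i⌉) (b i)).trans_le <|
      mul_le_one₀ hceil (abs_nonneg _) (hb i hi)
    linarith
  simpa [Finset.sum_add_distrib] using Finset.sum_le_sum hterm

section Coboundaries

variable {G X : Type*} [Group G] [MulAction G X] [TopologicalSpace X]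

variable (G X) in
def coboundaries : Set (X → ℝ) :=
  {f | ∃ U, IsClopen U ∧ ∃ g : G, f = U.indicator 1 - (g • U).indicator 1}

variable [ContinuousConstSMul G X]

theorem indicator_smul_sub_indicator_mem_coboundaries {U : Set X} (hU : IsClopen U) (g : G) :
    (g • U).indicator 1 - U.indicator 1 ∈ coboundaries G X :=
  ⟨g • U, hU.smul g, g⁻¹, by rw [inv_smul_smul]⟩

theorem neg_mem_coboundaries {f : X → ℝ} (hf : f ∈ coboundaries G X) :
    -f ∈ coboundaries G X := by
  obtain ⟨U, hU, g, rfl⟩ := hf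
  simpa using indicator_smul_sub_indicator_mem_coboundaries hU g

theorem exists_eq_sum_of_mem_closure_coboundaries {H : X → ℝ}
    (hH : H ∈ AddSubgroup.closure (coboundaries G X)) :
    ∃ (n : ℕ) (U : Fin n → Set X) (t : Fin n → G), (∀ i, IsClopen (U i)) ∧
      H = ∑ i, (U i).indicator 1 - ∑ i, (t i • U i).indicator 1 := by
  rw [← AddSubgroup.mem_toAddSubmonoid, AddSubgroup.closure_toAddSubmonoid,
    union_eq_left.2 fun f hf => by simpa using neg_mem_coboundaries hf] at hH
  obtain ⟨l, hl, rfl⟩ := AddSubmonoid.exists_list_of_mem_closure hH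
  choose U hU t ht using fun i : Fin l.length => hl _ (l.get_mem i)
  refine ⟨l.length, U, t, hU, ?_⟩
  rw [← Finset.sum_sub_distrib, ← Finset.sum_congr rfl fun i _ => ht i, ← List.sum_ofFn,
    List.ofFn_get]

variable [CompactSpace X] [MulAction.IsMinimal G X] {A : Set X}

theorem exists_one_le_sum_indicator_smul (hA : IsOpen A) (hne : A.Nonempty) :
    ∃ (n : ℕ) (g : Fin n → G), (1 : X → ℝ) ≤ ∑ i, (g i • A).indicator 1 := by
  obtain ⟨I, hI⟩ := isCompact_univ.exists_finite_cover_smul G hA hne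
  refine ⟨I.card, fun i => I.equivFin.symm i, one_le_sum_indicator_of_subset_iUnion fun x _ => ?_⟩
  obtain ⟨g, hg, hx⟩ := mem_iUnion₂.1 (hI (mem_univ x))
  exact mem_iUnion.2 ⟨I.equivFin ⟨g, hg⟩, by simpa using hx⟩

/-- Iterating `1_A + P ≾ P` gives `N • 1_A + P ≾ P` for every `N`, while `P ≾ L • 1_A` for a
fixed `L` because finitely many translates of `A` cover `X`. -/
theorem exists_isParadoxical_of_subequiv_indicator_add (hA : IsClopen A) (hne : A.Nonempty)
    {P : X → ℝ} {n : ℕ} (hP0 : 0 ≤ P) (hPn : P ≤ n • 1) (hP : Subequiv G (A.indicator 1 + P) P) :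
    ∃ k l : ℕ, 0 < l ∧ l < k ∧
      IsParadoxical (fun (g : G) (x : X) => g • x) {U | IsClopen U} A k l := by
  obtain ⟨m, g, hg⟩ := exists_one_le_sum_indicator_smul (G := G) hA.isOpen hne
  have hiter : ∀ N : ℕ, Subequiv G (N • A.indicator 1 + P) P := by
    intro N
    induction N with
    | zero => simpa using hP.mono (le_add_of_nonneg_left (indicator_one_nonneg A)) le_rfl
    | succ N ih =>
      simpa only [succ_nsmul, add_assoc] using
        (((subequiv_indicator_self (G := G) hA).nsmul N).add hP).trans ih
  have hcover : Subequiv G 1 (m • A.indicator 1) :=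
    (subequiv_sum_indicator (fun i => hA.smul (g i)) fun i => (g i)⁻¹).mono hg (by simp)
  have hPL : Subequiv G P ((n * m) • A.indicator 1) :=
    (hcover.nsmul n).mono hPn (by rw [mul_nsmul'])
  refine ⟨n * m + 2, n * m + 1, by omega, by omega, isParadoxical_of_subequiv ?_⟩
  exact ((hiter _).trans hPL).mono (le_add_of_nonneg_right hP0)
    (nsmul_le_nsmul_left (indicator_one_nonneg A) (by omega))

theorem exists_isParadoxical_of_smul_indicator_le_mem_closure (hA : IsClopen A)
    (hne : A.Nonempty) {H : X → ℝ} (hH : H ∈ AddSubgroup.closure (coboundaries G X)) {ε : ℝ}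
    (hε : 0 < ε) (hεH : ε • A.indicator 1 ≤ H) :
    ∃ k l : ℕ, 0 < l ∧ l < k ∧
      IsParadoxical (fun (g : G) (x : X) => g • x) {U | IsClopen U} A k l := by
  obtain ⟨n, U, t, hU, rfl⟩ := exists_eq_sum_of_mem_closure_coboundaries hH
  refine exists_isParadoxical_of_subequiv_indicator_add hA hne (n := n)
    (Finset.sum_nonneg fun i _ => indicator_one_nonneg _) ?_
    ((subequiv_sum_indicator hU t).mono (fun x => ?_) le_rfl)
  · simpa using Finset.sum_le_sum fun i (_ : i ∈ Finset.univ) => indicator_one_le_one (t i • U i)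
  -- the counts are integers, so a positive gap on `A` is a gap of at least one
  have hx := hεH x
  simp only [Pi.smul_apply, Pi.sub_apply, Pi.add_apply, Finset.sum_apply, sum_indicator_one_apply,
    smul_eq_mul] at hx ⊢
  by_cases hxA : x ∈ A
  · simp only [indicator_of_mem hxA, Pi.one_apply, mul_one] at hx ⊢
    have : (Nat.card {i // x ∈ t i • U i} : ℝ) < Nat.card {i // x ∈ U i} := by linarith
    have : Nat.card {i // x ∈ t i • U i} < Nat.card {i // x ∈ U i} := by exact_mod_cast this
    exact_mod_cast Nat.one_add_le_iff.2 this
  · simp only [indicator_of_notMem hxA, mul_zero, zero_add] at hx ⊢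
    linarith

theorem CompletelyNonparadoxical.nonpos_of_smul_indicator_le
    (hnp : CompletelyNonparadoxical (fun (g : G) (x : X) => g • x) {U | IsClopen U} A)
    (hA : IsClopen A) (hne : A.Nonempty) {h : X → ℝ}
    (hh : h ∈ Submodule.span ℝ (coboundaries G X)) {τ : ℝ} (hτ : τ • A.indicator 1 ≤ h) :
    τ ≤ 0 := by
  by_contra! hτ0
  obtain ⟨m, g, hg⟩ := exists_one_le_sum_indicator_smul (G := G) hA.isOpen hne
  obtain ⟨n, c, f, rfl⟩ := Submodule.mem_span_set'.1 hh
  obtain ⟨N, hN⟩ := exists_nat_gt (n * m / τ)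
  -- round `N • h` to an integer combination, paying for the error with the cover by the `g j • A`
  set H : X → ℝ := ∑ i, ⌈N * c i⌉ • (f i : X → ℝ) +
    n • ∑ j, ((g j • A).indicator 1 - A.indicator 1)
  have hH : H ∈ AddSubgroup.closure (coboundaries G X) :=
    add_mem (sum_mem fun i _ => zsmul_mem (AddSubgroup.subset_closure (f i).2) _)
      (nsmul_mem (sum_mem fun j _ => AddSubgroup.subset_closure
        (indicator_smul_sub_indicator_mem_coboundaries hA (g j))) _)
  have hHτ : ((N : ℝ) * τ - n * m) • A.indicator 1 ≤ H := fun x => by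
    have hround := Finset.univ.sum_mul_le_sum_ceil_mul_add_card (fun i => N * c i)
      (fun i => (f i : X → ℝ) x) fun i _ => by
        obtain ⟨U, -, s, hfi⟩ := (f i).2
        simpa [hfi] using abs_sub_indicator_one_le_one U (s • U) x
    simp only [Finset.card_univ, Fintype.card_fin] at hround
    have hcover : (1 : ℝ) ≤ ∑ j, (g j • A).indicator 1 x := by simpa using hg x
    have hτx := hτ x
    simp only [Pi.smul_apply, Finset.sum_apply, smul_eq_mul] at hτx
    have hHx : H x = ∑ i, ⌈N * c i⌉ * (f i : X → ℝ) x +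
        n * (∑ j, (g j • A).indicator 1 x - m * A.indicator 1 x) := by
      simp [H, Finset.sum_apply, Finset.sum_sub_distrib]
    have hsum : ∑ i, N * c i * (f i : X → ℝ) x = N * ∑ i, c i * (f i : X → ℝ) x := by
      simp [Finset.mul_sum, mul_assoc]
    rw [Pi.smul_apply, smul_eq_mul, hHx]
    linarith [mul_le_mul_of_nonneg_left hτx (Nat.cast_nonneg N),
      mul_le_mul_of_nonneg_left hcover (Nat.cast_nonneg n)]
  obtain ⟨k, l, hl, hlk, hpar⟩ := exists_isParadoxical_of_smul_indicator_le_mem_closure hA hne hH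
    (by rw [div_lt_iff₀ hτ0] at hN; linarith) hHτ
  exact hnp k l hl hlk hpar

end Coboundaries

section InvariantMeasure

open LocallyConstant

theorem isSetRing_isClopen (X : Type*) [TopologicalSpace X] :
    IsSetRing {U : Set X | IsClopen U} :=
  ⟨isClopen_empty, fun _ _ hU hV => hU.union hV, fun _ _ hU hV => hU.diff hV⟩

theorem exists_measure_eq_ofReal_charFn {X : Type*} [TopologicalSpace X] [CompactSpace X]
    [SecondCountableTopology X] [MeasurableSpace X] [BorelSpace X]
    (hzd : TopologicalSpace.IsTopologicalBasis {U : Set X | IsClopen U})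
    (φ : LocallyConstant X ℝ →ₗ[ℝ] ℝ) (hφ : ∀ f : LocallyConstant X ℝ, 0 ≤ ⇑f → 0 ≤ φ f) :
    ∃ μ : Measure X, ∀ U (hU : IsClopen U), μ U = ENNReal.ofReal (φ (charFn ℝ hU)) := by
  classical
  have hC := isSetRing_isClopen X
  have hχ : ∀ {U} (hU : IsClopen U), 0 ≤ φ (charFn ℝ hU) := fun hU =>
    hφ _ (by simpa [coe_charFn] using indicator_one_nonneg _)
  let m : AddContent ℝ≥0∞ {U : Set X | IsClopen U} := hC.addContent_of_union
    (fun U => if hU : IsClopen U then ENNReal.ofReal (φ (charFn ℝ hU)) else 0)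
    (by
      rw [dif_pos isClopen_empty, ENNReal.ofReal_eq_zero, ← map_zero φ]
      exact le_of_eq (congrArg φ (by ext; simp [coe_charFn])))
    fun {U V} (hU : IsClopen U) (hV : IsClopen V) hUV => by
      rw [dif_pos hU, dif_pos hV, dif_pos (hU.union hV), ← ENNReal.ofReal_add (hχ hU) (hχ hV),
        ← map_add]
      congr 2
      ext x
      simp [coe_charFn, indicator_union_of_disjoint hUV]
  have hm : m.IsSigmaSubadditive := fun f hf hU => by
    obtain ⟨S, hS⟩ := hU.isClosed.isCompact.elim_finite_subcover f (fun i => (hf i).isOpen)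
      subset_rfl
    calc m (⋃ i, f i) ≤ m (⋃ i ∈ S, f i) :=
          addContent_mono hC.isSetSemiring hU (hC.biUnion_mem S fun i _ => hf i) hS
      _ ≤ ∑ i ∈ S, m (f i) := addContent_biUnion_le hC fun i _ => hf i
      _ ≤ ∑' i, m (f i) := ENNReal.sum_le_tsum S
  have hgen : ‹MeasurableSpace X› = MeasurableSpace.generateFrom {U | IsClopen U} :=
    BorelSpace.measurable_eq.trans hzd.borel_eq_generateFrom
  exact ⟨m.measure hC.isSetSemiring hgen.le hm, fun U hU => by
    rw [m.measure_eq hC.isSetSemiring hgen hm hU]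
    exact dif_pos hU⟩

theorem exists_smul_sum_charFn_add_nonneg {X : Type*} [TopologicalSpace X] [CompactSpace X]
    {n : ℕ} {U : Fin n → Set X} (hU : ∀ i, IsClopen (U i))
    (hcover : (1 : X → ℝ) ≤ ∑ i, (U i).indicator 1) (y : LocallyConstant X ℝ) :
    ∃ K : ℝ, 0 ≤ ⇑(K • ∑ i, charFn ℝ (hU i) + y) := by
  obtain ⟨K, hK⟩ := y.range_finite.bddBelow
  refine ⟨max (-K) 0, fun x => ?_⟩
  have hx : (1 : ℝ) ≤ ∑ i, (U i).indicator 1 x := by simpa using hcover x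
  have hyx : K ≤ y x := hK ⟨x, rfl⟩
  have hsum := map_sum (evalAddMonoidHom (Y := ℝ) x) (fun i => charFn ℝ (hU i)) Finset.univ
  simp only [evalAddMonoidHom_apply] at hsum
  simp [hsum, coe_charFn]
  nlinarith [le_max_left (-K) 0, le_max_right (-K) 0]

variable {G X : Type*} [Group G] [MulAction G X] [TopologicalSpace X] [ContinuousConstSMul G X]
  [CompactSpace X] [MulAction.IsMinimal G X] {A : Set X}

theorem CompletelyNonparadoxical.exists_positive_functional
    (hnp : CompletelyNonparadoxical (fun (g : G) (x : X) => g • x) {U | IsClopen U} A)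
    (hA : IsClopen A) (hne : A.Nonempty) :
    ∃ φ : LocallyConstant X ℝ →ₗ[ℝ] ℝ, (∀ f : LocallyConstant X ℝ, 0 ≤ ⇑f → 0 ≤ φ f) ∧
      (∀ f : LocallyConstant X ℝ, ⇑f ∈ coboundaries G X → φ f = 0) ∧ φ (charFn ℝ hA) = 1 := by
  let cob : Submodule ℝ (LocallyConstant X ℝ) :=
    (Submodule.span ℝ (coboundaries G X)).comap (coeFnₗ ℝ)
  have key : ∀ h ∈ cob, ∀ τ : ℝ, τ • A.indicator 1 ≤ ⇑h → τ ≤ 0 :=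
    fun h hh τ hτ => hnp.nonpos_of_smul_indicator_le hA hne hh hτ
  have hχA : charFn ℝ hA ∉ cob := fun h =>
    absurd (key _ h 1 (by simp [coe_charFn])) (by norm_num)
  let f₀ : LocallyConstant X ℝ →ₗ.[ℝ] ℝ := LinearPMap.supSpanSingleton ⟨cob, 0⟩ _ 1 hχA
  have nonneg : ∀ z : f₀.domain, (z : LocallyConstant X ℝ) ∈
      (PointedCone.positive ℝ (X → ℝ)).comap (coeFnₗ ℝ) → 0 ≤ f₀ z := by
    rintro ⟨z, hz⟩ hz0
    obtain ⟨y, hy, w, hw, rfl⟩ := Submodule.mem_sup.1 hz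
    obtain ⟨c, rfl⟩ := Submodule.mem_span_singleton.1 hw
    have hval : f₀ ⟨y + c • charFn ℝ hA, hz⟩ = c :=
      (LinearPMap.supSpanSingleton_apply_mk (⟨cob, 0⟩ : _ →ₗ.[ℝ] ℝ) _ 1 hχA y hy c).trans
        (by simp)
    rw [hval]
    have := key y hy (-c) fun x => by
      have := hz0 x
      simp [coe_charFn] at this ⊢
      linarith
    linarith
  have dense : ∀ y, ∃ z : f₀.domain, (z : LocallyConstant X ℝ) + y ∈
      (PointedCone.positive ℝ (X → ℝ)).comap (coeFnₗ ℝ) := by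
    intro y
    obtain ⟨m, g, hg⟩ := exists_one_le_sum_indicator_smul (G := G) hA.isOpen hne
    obtain ⟨K, hK⟩ := exists_smul_sum_charFn_add_nonneg (fun i => hA.smul (g i)) hg y
    have hz : K • ∑ i, charFn ℝ (hA.smul (g i)) ∈ f₀.domain := by
      refine Submodule.smul_mem _ _ (Submodule.sum_mem _ fun i _ => ?_)
      rw [← sub_add_cancel (charFn ℝ (hA.smul (g i))) (charFn ℝ hA)]
      refine Submodule.add_mem_sup (Submodule.subset_span ?_) (Submodule.mem_span_singleton_self _)
      change ⇑(charFn ℝ (hA.smul (g i)) - charFn ℝ hA) ∈ coboundaries G X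
      rw [coe_sub, coe_charFn, coe_charFn]
      exact indicator_smul_sub_indicator_mem_coboundaries hA (g i)
    exact ⟨⟨_, hz⟩, hK⟩
  obtain ⟨φ, hφf₀, hφpos⟩ := riesz_extension _ f₀ nonneg dense
  refine ⟨φ, fun f hf => hφpos f hf, fun f hf => ?_, ?_⟩
  · have hf' : f ∈ cob := Submodule.subset_span hf
    rw [hφf₀ ⟨f, Submodule.mem_sup_left hf'⟩,
      LinearPMap.supSpanSingleton_apply_of_mem _ _ _ _ hf']
    rfl
  · rw [hφf₀ ⟨_, Submodule.mem_sup_right (Submodule.mem_span_singleton_self _)⟩,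
      LinearPMap.supSpanSingleton_apply_self]

theorem CompletelyNonparadoxical.exists_invariant_probabilityMeasure [SecondCountableTopology X]
    [MeasurableSpace X] [BorelSpace X]
    (hzd : TopologicalSpace.IsTopologicalBasis {U : Set X | IsClopen U})
    (hnp : CompletelyNonparadoxical (fun (g : G) (x : X) => g • x) {U | IsClopen U} A)
    (hA : IsClopen A) (hne : A.Nonempty) :
    ∃ μ : Measure X, IsProbabilityMeasure μ ∧ ∀ g : G, Measure.map (g • ·) μ = μ := by
  obtain ⟨φ, hpos, hcob, hφA⟩ := hnp.exists_positive_functional hA hne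
  have hφ1 : 1 ≤ φ 1 := by
    have := hpos (1 - charFn ℝ hA) <| by
      rw [coe_sub, coe_one, coe_charFn]
      exact sub_nonneg.2 (indicator_one_le_one A)
    rw [map_sub, hφA] at this
    linarith
  obtain ⟨μ, hμ⟩ := exists_measure_eq_ofReal_charFn hzd ((φ 1)⁻¹ • φ) fun f hf =>
    mul_nonneg (inv_nonneg.2 (by linarith)) (hpos f hf)
  have hμuniv : μ univ = 1 := by
    rw [hμ univ isClopen_univ, show charFn ℝ isClopen_univ = (1 : LocallyConstant X ℝ) by
      ext; simp [coe_charFn]]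
    simp [(by linarith : φ 1 ≠ 0)]
  have : IsProbabilityMeasure μ := ⟨hμuniv⟩
  refine ⟨μ, this, fun g => ext_of_generate_finite _
    (BorelSpace.measurable_eq.trans hzd.borel_eq_generateFrom)
    (fun U hU V hV _ => hU.inter hV) (fun U (hU : IsClopen U) => ?_) (by
      rw [Measure.map_apply (continuous_const_smul g).measurable MeasurableSet.univ,
        preimage_univ])⟩
  have hcobU : ⇑(charFn ℝ hU - charFn ℝ (hU.smul g⁻¹)) ∈ coboundaries G X := by
    rw [coe_sub, coe_charFn, coe_charFn]
    exact ⟨U, hU, g⁻¹, rfl⟩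
  rw [Measure.map_apply (continuous_const_smul g).measurable hU.isOpen.measurableSet,
    preimage_smul, hμ _ (hU.smul _), hμ _ hU]
  simp [sub_eq_zero.1 ((map_sub φ _ _).symm.trans (hcob _ hcobU))]

end InvariantMeasure

/-- For a minimal continuous action of `G` on a zero-dimensional compact metrizable space
`X` the following are equivalent: (1) there is a `G`-invariant Borel probability measure;
(2) `X` is completely `(G, clopen)`-nonparadoxical; (3) some nonempty clopen subset of `X`
is completely `(G, clopen)`-nonparadoxical. -/
theorem stmt5 {G X : Type*} [Group G] [MetricSpace X] [CompactSpace X]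
    [MeasurableSpace X] [BorelSpace X]
    (hzd : TopologicalSpace.IsTopologicalBasis {U : Set X | IsClopen U})
    (act : G → X → X)
    (hone : ∀ x, act 1 x = x)
    (hmul : ∀ s t x, act (s * t) x = act s (act t x))
    (hcont : ∀ s, Continuous (act s))
    (hmin : ∀ x : X, Dense (Set.range fun s : G => act s x)) :
    ((∃ μ : Measure X, IsProbabilityMeasure μ ∧ ∀ s, Measure.map (act s) μ = μ) ↔
        CompletelyNonparadoxical act {U : Set X | IsClopen U} Set.univ) ∧
    ((∃ μ : Measure X, IsProbabilityMeasure μ ∧ ∀ s, Measure.map (act s) μ = μ) ↔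
        ∃ A : Set X, IsClopen A ∧ A.Nonempty ∧
          CompletelyNonparadoxical act {U : Set X | IsClopen U} A) := by
  let _ : MulAction G X := { smul := act, one_smul := hone, mul_smul := hmul }
  have : ContinuousConstSMul G X := ⟨hcont⟩
  have : MulAction.IsMinimal G X := ⟨hmin⟩
  have of_measure : (∃ μ : Measure X, IsProbabilityMeasure μ ∧ ∀ s, Measure.map (act s) μ = μ) →
      CompletelyNonparadoxical act {U : Set X | IsClopen U} univ := by
    rintro ⟨μ, _, hμ⟩
    have : SMulInvariantMeasure G X μ :=
      ⟨fun s U hU => (Measure.map_apply (hcont s).measurable hU).symm.trans (by rw [hμ])⟩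
    exact completelyNonparadoxical_of_measure (fun U hU => hU.isOpen.measurableSet) μ
      MeasurableSet.univ (by simp) (by simp)
  have to_measure : ∀ A : Set X, IsClopen A → A.Nonempty →
      CompletelyNonparadoxical act {U : Set X | IsClopen U} A →
      ∃ μ : Measure X, IsProbabilityMeasure μ ∧ ∀ s, Measure.map (act s) μ = μ :=
    fun A hA hne hnp => hnp.exists_invariant_probabilityMeasure hzd hA hne
  refine ⟨⟨of_measure, fun h => to_measure _ isClopen_univ h.nonempty h⟩,
    ⟨fun h => ⟨univ, isClopen_univ, (of_measure h).nonempty, of_measure h⟩, ?_⟩⟩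
  rintro ⟨A, hA, hne, hnp⟩
  exact to_measure A hA hne hnp
end

section
/- Let G act continuously and residually finitely on a zero-dimensional compact metrizable space X. Then every nonempty clopen subset of X is completely (G, clopen)-nonparadoxical. -/
/-! A paradoxical decomposition of `A` involves finitely many clopen sets and group elements.
Residual finiteness provides a finite `G`-set `E` and a map `ζ : E → X` that, up to an
entourage fine enough to see `A` and these clopen sets, is equivariant and has dense image;
pulling the decomposition back along `ζ` yields a paradoxical decomposition of the nonempty
set `ζ⁻¹' A` of the finite `G`-set `E`. There, counting incidences gives
`k·|ζ⁻¹' A| ≤ ∑ᵢ |Aᵢ| = ∑ᵢ |sᵢAᵢ| ≤ l·|ζ⁻¹' A|`, contradicting `l < k`. -/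

open Function

lemma leftInverse_act_inv {G X : Type*} [Group G] {act : G → X → X}
    (hone : ∀ x, act 1 x = x) (hmul : ∀ s t x, act (s * t) x = act s (act t x)) (s : G) :
    LeftInverse (act s⁻¹) (act s) := fun x => by
  rw [← hmul, inv_mul_cancel, hone]

lemma image_act_eq_preimage_act_inv {G X : Type*} [Group G] {act : G → X → X}
    (hone : ∀ x, act 1 x = x) (hmul : ∀ s t x, act (s * t) x = act s (act t x)) (s : G)
    (U : Set X) : act s '' U = act s⁻¹ ⁻¹' U := by
  refine congrFun (Set.image_eq_preimage_of_inverse (leftInverse_act_inv hone hmul s) ?_) U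
  have h := leftInverse_act_inv hone hmul s⁻¹
  rwa [inv_inv] at h

lemma isOpen_setOf_mem_iff_mem {X : Type*} [TopologicalSpace X] {C : Set X} (hC : IsClopen C) :
    IsOpen {p : X × X | p.1 ∈ C ↔ p.2 ∈ C} := by
  have h : {p : X × X | p.1 ∈ C ↔ p.2 ∈ C} = C ×ˢ C ∪ Cᶜ ×ˢ Cᶜ := by
    ext p
    simp only [Set.mem_ofPred_eq, Set.mem_union, Set.mem_prod, Set.mem_compl_iff]
    tauto
  rw [h]
  exact (hC.isOpen.prod hC.isOpen).union (hC.compl.isOpen.prod hC.compl.isOpen)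

lemma sum_card_mem_eq_sum_card {ι E : Type*} [Fintype ι] [Fintype E] (P : ι → Set E) :
    ∑ z, Nat.card {i // z ∈ P i} = ∑ i, Nat.card (P i) := by
  classical
  simp only [Nat.card_eq_fintype_card, Fintype.card_subtype, Finset.card_filter]
  exact Finset.sum_comm

theorem not_isParadoxical_of_finite {G E : Type*} [Finite E] {σ : G → E → E}
    (hσ : ∀ s, Injective (σ s)) (S : Set (Set E)) {B : Set E} (hB : B.Nonempty) {k l : ℕ}
    (hlk : l < k) : ¬ IsParadoxical σ S B k l := by
  classical
  rintro ⟨n, P, ss, -, hk, hl, hout⟩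
  have := Fintype.ofFinite E
  set m := ∑ z, B.indicator (1 : E → ℕ) z
  have hm : 0 < m := by
    obtain ⟨z, hz⟩ := hB
    exact Finset.sum_pos' (fun _ _ => Nat.zero_le _) ⟨z, Finset.mem_univ _, by simp [hz]⟩
  have hcount : k * m ≤ l * m := calc
    k * m = ∑ z, k * B.indicator 1 z := Finset.mul_sum _ _ _
    _ ≤ ∑ z, Nat.card {i // z ∈ P i} := by
      refine Finset.sum_le_sum fun z _ => ?_
      by_cases hz : z ∈ B
      · simpa [hz] using hk z hz
      · simp [hz]
    _ = ∑ i, Nat.card (σ (ss i) '' P i) := by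
      simp only [sum_card_mem_eq_sum_card, Nat.card_image_of_injective (hσ _)]
    _ = ∑ z, Nat.card {i // z ∈ σ (ss i) '' P i} := (sum_card_mem_eq_sum_card _).symm
    _ ≤ ∑ z, l * B.indicator 1 z := by
      refine Finset.sum_le_sum fun z _ => ?_
      by_cases hz : z ∈ B
      · simpa [hz] using hl z hz
      · simp [hz, hout z hz]
    _ = l * m := (Finset.mul_sum _ _ _).symm
  exact (Nat.le_of_mul_le_mul_right hcount hm).not_gt hlk

theorem isParadoxical_preimage {G X E : Type*} {act : G → X → X} {σ : G → E → E} {A : Set X}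
    {k l n : ℕ} {As : Fin n → Set X} {ss : Fin n → G}
    (hk : ∀ x ∈ A, k ≤ Nat.card {i : Fin n // x ∈ As i})
    (hl : ∀ x ∈ A, Nat.card {i : Fin n // x ∈ act (ss i) '' As i} ≤ l)
    (hout : ∀ x, x ∉ A → ∀ i, x ∉ act (ss i) '' As i) (ζ : E → X)
    (hζ : ∀ i z, ζ z ∈ As i → ζ (σ (ss i) z) ∈ act (ss i) '' As i) :
    IsParadoxical σ Set.univ (ζ ⁻¹' A) k l := by
  refine ⟨n, fun i => ζ ⁻¹' As i, ss, fun _ => trivial, fun z hz => hk _ hz,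
    fun z hz => (hl _ hz).trans' (Nat.card_mono (Set.toFinite _) ?_), ?_⟩
  · rintro i ⟨w, hw, rfl⟩
    exact hζ i w hw
  · rintro z hz i ⟨w, hw, rfl⟩
    exact hz (of_not_not fun h => hout _ h i (hζ i w hw))

theorem stmt6_general {G X : Type*} [Group G] [MetricSpace X]
    (act : G → X → X)
    (hone : ∀ x, act 1 x = x)
    (hmul : ∀ s t x, act (s * t) x = act s (act t x))
    (hcont : ∀ s, Continuous (act s))
    (hrf : IsRFAction act) :
    ∀ A : Set X, IsClopen A → A.Nonempty →
      CompletelyNonparadoxical act {U : Set X | IsClopen U} A := by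
  classical
  intro A hA hAne k l _ hlk ⟨n, As, ss, hAs, hk, hl, hout⟩
  set C := fun i => act (ss i) '' As i
  have hC : ∀ i, IsClopen (C i) := fun i => by
    simpa only [C, image_act_eq_preimage_act_inv hone hmul] using (hAs i).preimage (hcont _)
  set ε := {p : X × X | p.1 ∈ A ↔ p.2 ∈ A} ∩ ⋂ i, {p : X × X | p.1 ∈ C i ↔ p.2 ∈ C i}
  have hε : IsOpen ε := (isOpen_setOf_mem_iff_mem hA).inter
    (isOpen_iInter_of_finite fun i => isOpen_setOf_mem_iff_mem (hC i))
  obtain ⟨E, _, σ, hσ1, hσmul, ζ, hdense, happrox⟩ :=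
    hrf (Finset.univ.image ss) ε hε fun x => ⟨Iff.rfl, Set.mem_iInter.2 fun _ => Iff.rfl⟩
  have hζ : ∀ i z, ζ z ∈ As i → ζ (σ (ss i) z) ∈ C i := fun i z hz =>
    (Set.mem_iInter.1 (happrox z (ss i) (by simp)).2 i).2 (Set.mem_image_of_mem _ hz)
  obtain ⟨x, hx⟩ := hAne
  obtain ⟨z, hz⟩ := hdense x
  exact not_isParadoxical_of_finite (fun s => (leftInverse_act_inv hσ1 hσmul s).injective)
    Set.univ ⟨z, hz.1.1 hx⟩ hlk (isParadoxical_preimage hk hl hout ζ hζ)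

/-- If a continuous action of `G` on a zero-dimensional compact metrizable space is
residually finite, then every nonempty clopen subset of `X` is completely
`(G, clopen)`-nonparadoxical. -/
theorem stmt6 {G X : Type*} [Group G] [MetricSpace X] [CompactSpace X]
    (hzd : TopologicalSpace.IsTopologicalBasis {U : Set X | IsClopen U})
    (act : G → X → X)
    (hone : ∀ x, act 1 x = x)
    (hmul : ∀ s t x, act (s * t) x = act s (act t x))
    (hcont : ∀ s, Continuous (act s))
    (hrf : IsRFAction act) :
    ∀ A : Set X, IsClopen A → A.Nonempty →
      CompletelyNonparadoxical act {U : Set X | IsClopen U} A :=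
  stmt6_general act hone hmul hcont hrf
end

section
/- For every n ∈ ℕ and ε > 0 there exists δ > 0 such that whenever d ∈ ℕ and a₁, …, aₙ are self-adjoint elements of M_d satisfying ‖aᵢ² − aᵢ‖ < δ for all i, ‖aᵢaⱼ‖ < δ for all i ≠ j, and ∑ᵢ aᵢ = 1, there exist pairwise orthogonal projections p₁, …, pₙ ∈ M_d with ∑ᵢ pᵢ = 1 and ‖pᵢ − aᵢ‖ < ε for all i. -/
/-!
Put `x = ∑ i • aᵢ`. Since `∑ aⱼ = 1`, `(x - j) aⱼ = ∑ᵢ (i - j) aᵢ aⱼ` is small, so `x` nearly acts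
as the scalar `j` on each `aⱼ`. Hence the spectrum of `x` lies within `1/4` of `{0, …, n - 1}`,
and applying to `x` plateau functions `χᵢ` around the integers `i` gives orthogonal projections
`pᵢ = χᵢ(x)` summing to `1`. A bounded function `f` vanishing near `j` factors as
`f(s) = g(s) (s - j)` with `g` bounded, so `f(x) aⱼ = g(x) (x - j) aⱼ` is small. Applied to `χᵢ`
for `j ≠ i` and to `1 - χᵢ` for `j = i`, this bounds `pᵢ - aᵢ = ∑_{j ≠ i} pᵢ aⱼ - (1 - pᵢ) aᵢ`.
-/

/-- The `d × d` complex matrix algebra with operator norm, realized as the algebra of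
bounded operators on the `d`-dimensional complex Hilbert space. -/
abbrev MatAlg (d : ℕ) := EuclideanSpace ℂ (Fin d) →L[ℂ] EuclideanSpace ℂ (Fin d)

noncomputable def plateau (c r s : ℝ) : ℝ := min 1 (max 0 (2 - |s - c| / r))

noncomputable def truncInv (r s : ℝ) : ℝ := s / max (s ^ 2) (r ^ 2)

section RealFunctions

variable {c r s : ℝ}

@[fun_prop]
lemma continuous_plateau (c r : ℝ) : Continuous (plateau c r) := by
  unfold plateau; fun_prop

lemma plateau_nonneg (c r s : ℝ) : 0 ≤ plateau c r s :=
  le_min zero_le_one (le_max_left _ _)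

lemma plateau_le_one (c r s : ℝ) : plateau c r s ≤ 1 :=
  min_le_left _ _

lemma abs_plateau_le_one (c r s : ℝ) : |plateau c r s| ≤ 1 := by
  rw [abs_of_nonneg (plateau_nonneg c r s)]
  exact plateau_le_one c r s

lemma abs_one_sub_plateau_le_one (c r s : ℝ) : |1 - plateau c r s| ≤ 1 := by
  rw [abs_of_nonneg (sub_nonneg.2 (plateau_le_one c r s))]
  linarith [plateau_nonneg c r s]

lemma plateau_eq_one (hr : 0 < r) (h : |s - c| ≤ r) : plateau c r s = 1 := by
  have : 1 ≤ 2 - |s - c| / r := by rw [le_sub_comm, div_le_iff₀ hr]; linarith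
  exact min_eq_left (le_max_of_le_right this)

lemma plateau_eq_zero (hr : 0 < r) (h : 2 * r ≤ |s - c|) : plateau c r s = 0 := by
  have : 2 - |s - c| / r ≤ 0 := by rw [sub_nonpos, le_div_iff₀ hr]; linarith
  rw [plateau, max_eq_left this, min_eq_right zero_le_one]

lemma continuous_truncInv (hr : r ≠ 0) : Continuous (truncInv r) :=
  continuous_id.div (by fun_prop) fun s => (lt_max_of_lt_right (by positivity)).ne'

lemma abs_truncInv_le (hr : 0 < r) (s : ℝ) : |truncInv r s| ≤ r⁻¹ := by
  have hmax : 0 < max (s ^ 2) (r ^ 2) := lt_max_of_lt_right (by positivity)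
  rw [truncInv, abs_div, abs_of_pos hmax, div_le_iff₀ hmax, ← div_eq_inv_mul, le_div_iff₀ hr]
  rcases le_total |s| r with h | h
  · nlinarith [le_max_right (s ^ 2) (r ^ 2), abs_nonneg s]
  · nlinarith [le_max_left (s ^ 2) (r ^ 2), sq_abs s]

lemma truncInv_mul_self (hr : 0 < r) (h : r ≤ |s|) : truncInv r s * s = 1 := by
  have hs : s ≠ 0 := abs_pos.1 (hr.trans_le h)
  have : r ^ 2 ≤ s ^ 2 := by rw [← sq_abs s]; exact pow_le_pow_left₀ hr.le h 2
  rw [truncInv, max_eq_left this]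
  field_simp

lemma one_le_abs_natCast_sub_natCast {i j : ℕ} (h : i ≠ j) : (1 : ℝ) ≤ |(i : ℝ) - j| := by
  have : (1 : ℤ) ≤ |(i : ℤ) - j| := Int.one_le_abs (sub_ne_zero.2 (by exact_mod_cast h))
  exact_mod_cast this

lemma abs_natCast_sub_natCast_le {i j n : ℕ} (hi : i ≤ n) (hj : j ≤ n) : |(i : ℝ) - j| ≤ n := by
  have hi' : (i : ℝ) ≤ n := by exact_mod_cast hi
  have hj' : (j : ℝ) ≤ n := by exact_mod_cast hj
  have hi0 : (0 : ℝ) ≤ i := i.cast_nonneg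
  have hj0 : (0 : ℝ) ≤ j := j.cast_nonneg
  exact abs_sub_le_iff.2 ⟨by linarith, by linarith⟩

end RealFunctions

section PartitionOfUnity

variable {A : Type*} {ι : Type*} [Fintype ι]

lemma sum_smul_sub_algebraMap_mul [Ring A] [Algebra ℝ A] {a : ι → A} (hsum : ∑ i, a i = 1)
    (c : ι → ℝ) (j : ι) :
    (∑ i, c i • a i - algebraMap ℝ A (c j)) * a j = ∑ i, (c i - c j) • (a i * a j) := by
  have : algebraMap ℝ A (c j) * a j = ∑ i, c j • (a i * a j) := by
    rw [← Finset.smul_sum, ← Finset.sum_mul, hsum, one_mul, Algebra.smul_def]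
  simp only [sub_mul, Finset.sum_mul, this, sub_smul, Finset.sum_sub_distrib, smul_mul_assoc]

lemma norm_sum_smul_sub_algebraMap_mul_le [NormedRing A] [NormedAlgebra ℝ A] {a : ι → A}
    (hsum : ∑ i, a i = 1) {δ : ℝ} (ha : ∀ i j, i ≠ j → ‖a i * a j‖ ≤ δ) (c : ι → ℝ) (j : ι) :
    ‖(∑ i, c i • a i - algebraMap ℝ A (c j)) * a j‖ ≤ ∑ i, |c i - c j| * δ := by
  rw [sum_smul_sub_algebraMap_mul hsum]
  refine (norm_sum_le _ _).trans (Finset.sum_le_sum fun i _ => ?_)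
  rw [norm_smul, Real.norm_eq_abs]
  rcases eq_or_ne i j with rfl | hij
  · simp
  · exact mul_le_mul_of_nonneg_left (ha i j hij) (abs_nonneg _)

end PartitionOfUnity

section FunctionalCalculus

variable {A : Type*} [NormedRing A] [StarRing A] [NormedAlgebra ℝ A]
  [IsometricContinuousFunctionalCalculus ℝ A IsSelfAdjoint]

lemma cfc_sub_algebraMap {x : A} (hx : IsSelfAdjoint x) (c : ℝ) :
    cfc (fun s : ℝ => s - c) x = x - algebraMap ℝ A c := by
  rw [cfc_sub _ _ x, cfc_id' ℝ x, cfc_const c x]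

lemma norm_cfc_mul_le {f : ℝ → ℝ} {c r : ℝ} (hr : 0 < r) (hf : Continuous f)
    (hf_le : ∀ s, |f s| ≤ 1) (hf_zero : ∀ s, |s - c| < r → f s = 0)
    {x : A} (hx : IsSelfAdjoint x) (y : A) :
    ‖cfc f x * y‖ ≤ r⁻¹ * ‖(x - algebraMap ℝ A c) * y‖ := by
  set g : ℝ → ℝ := fun s => f s * truncInv r (s - c)
  have hg : Continuous g := hf.mul ((continuous_truncInv hr.ne').comp (by fun_prop))
  have hfg : cfc f x = cfc g x * (x - algebraMap ℝ A c) := by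
    rw [← cfc_sub_algebraMap hx, ← cfc_mul g _ x hg.continuousOn]
    refine cfc_congr fun s _ => ?_
    rcases lt_or_ge |s - c| r with h | h
    · simp [g, hf_zero s h]
    · rw [mul_assoc, truncInv_mul_self hr h, mul_one]
  have hg_le : ‖cfc g x‖ ≤ r⁻¹ := by
    refine norm_cfc_le (inv_nonneg.2 hr.le) fun s _ => ?_
    rw [Real.norm_eq_abs, abs_mul, ← one_mul r⁻¹]
    exact mul_le_mul (hf_le s) (abs_truncInv_le hr _) (abs_nonneg _) zero_le_one
  rw [hfg, mul_assoc]
  exact (norm_mul_le _ _).trans (mul_le_mul_of_nonneg_right hg_le (norm_nonneg _))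

variable {ι : Type*} {a : ι → A} {x : A} {c : ι → ℝ} {η : ℝ}

-- A bump at a spectral point far from every `c k` has norm `1`, yet it almost kills every `a j`.
lemma exists_abs_sub_lt_of_mem_spectrum [Fintype ι] (hsum : ∑ i, a i = 1) (hx : IsSelfAdjoint x)
    (hη : ∀ j, ‖(x - algebraMap ℝ A (c j)) * a j‖ ≤ η) {r : ℝ} (hr : 0 < r)
    (hsmall : Fintype.card ι * η < r / 2) {t : ℝ} (ht : t ∈ spectrum ℝ x) :
    ∃ k, |t - c k| < r := by
  by_contra! hfar
  have hr2 : 0 < r / 2 := half_pos hr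
  set f := plateau t (r / 4)
  have hf_zero : ∀ k s, |s - c k| < r / 2 → f s = 0 := fun k s hs => by
    refine plateau_eq_zero (by positivity) ?_
    have := abs_sub_le t s (c k)
    rw [abs_sub_comm t s] at this
    linarith [hfar k]
  have hterm : ∀ j, ‖cfc f x * a j‖ ≤ (r / 2)⁻¹ * η := fun j =>
    (norm_cfc_mul_le hr2 (by fun_prop) (abs_plateau_le_one _ _) (hf_zero j) hx _).trans
      (mul_le_mul_of_nonneg_left (hη j) (by positivity))
  have hone : 1 ≤ ‖cfc f x‖ := by
    have := norm_apply_le_norm_cfc f x ht (by fun_prop) hx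
    rwa [show f t = 1 from plateau_eq_one (by positivity) (by simp; positivity), norm_one] at this
  have hle : ‖cfc f x‖ ≤ Fintype.card ι * η / (r / 2) := calc
    ‖cfc f x‖ = ‖∑ j, cfc f x * a j‖ := by rw [← Finset.mul_sum, hsum, mul_one]
    _ ≤ ∑ j, ‖cfc f x * a j‖ := norm_sum_le _ _
    _ ≤ ∑ _j : ι, (r / 2)⁻¹ * η := Finset.sum_le_sum fun j _ => hterm j
    _ = Fintype.card ι * η / (r / 2) := by simp [div_eq_inv_mul, mul_left_comm]
  linarith [(div_lt_one hr2).2 hsmall]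

section Separated

variable (hsep : ∀ i j, i ≠ j → 1 ≤ |c i - c j|)
include hsep

lemma plateau_eq_zero_of_abs_sub_lt {i j : ι} (hij : i ≠ j) {s : ℝ} (hs : |s - c j| < 1 / 4) :
    plateau (c i) (1 / 4) s = 0 := by
  refine plateau_eq_zero (by norm_num) ?_
  have := abs_sub_le (c i) s (c j)
  rw [abs_sub_comm (c i) s] at this
  linarith [hsep i j hij]

variable (hspec : ∀ t ∈ spectrum ℝ x, ∃ k, |t - c k| < 1 / 4)
include hspec

lemma cfc_plateau_mul_self (i : ι) :
    cfc (plateau (c i) (1 / 4)) x * cfc (plateau (c i) (1 / 4)) x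
      = cfc (plateau (c i) (1 / 4)) x := by
  rw [← cfc_mul _ _ x]
  refine cfc_congr fun t ht => ?_
  obtain ⟨k, hk⟩ := hspec t ht
  rcases eq_or_ne i k with rfl | hik
  · rw [plateau_eq_one (by norm_num) hk.le, mul_one]
  · rw [plateau_eq_zero_of_abs_sub_lt hsep hik hk, mul_zero]

lemma cfc_plateau_mul_cfc_plateau {i j : ι} (hij : i ≠ j) :
    cfc (plateau (c i) (1 / 4)) x * cfc (plateau (c j) (1 / 4)) x = 0 := by
  rw [← cfc_mul _ _ x, ← cfc_const_zero ℝ x]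
  refine cfc_congr fun t ht => ?_
  obtain ⟨k, hk⟩ := hspec t ht
  rcases eq_or_ne i k with rfl | hik
  · rw [plateau_eq_zero_of_abs_sub_lt hsep hij.symm hk, mul_zero]
  · rw [plateau_eq_zero_of_abs_sub_lt hsep hik hk, zero_mul]

lemma sum_cfc_plateau [Fintype ι] (hx : IsSelfAdjoint x) :
    ∑ i, cfc (plateau (c i) (1 / 4)) x = 1 := by
  rw [← cfc_sum_univ _ x, ← cfc_const_one ℝ x]
  refine cfc_congr fun t ht => ?_
  obtain ⟨k, hk⟩ := hspec t ht
  rw [Finset.sum_apply,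
    Fintype.sum_eq_single k fun i hik => plateau_eq_zero_of_abs_sub_lt hsep hik hk,
    plateau_eq_one (by norm_num) hk.le]

end Separated

lemma norm_cfc_plateau_sub_le [Fintype ι] (hsep : ∀ i j, i ≠ j → 1 ≤ |c i - c j|)
    (hsum : ∑ i, a i = 1) (hx : IsSelfAdjoint x)
    (hη : ∀ j, ‖(x - algebraMap ℝ A (c j)) * a j‖ ≤ η) (i : ι) :
    ‖cfc (plateau (c i) (1 / 4)) x - a i‖ ≤ Fintype.card ι * (4 * η) := by
  classical
  set p := cfc (plateau (c i) (1 / 4)) x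
  have hq : 1 - p = cfc (fun s => 1 - plateau (c i) (1 / 4) s) x := by
    rw [cfc_sub _ _ x, cfc_const_one ℝ x]
  have hpa : ∀ j, j ≠ i → ‖p * a j‖ ≤ 4 * η := fun j hji =>
    (norm_cfc_mul_le (by norm_num) (by fun_prop) (abs_plateau_le_one _ _)
      (fun s => plateau_eq_zero_of_abs_sub_lt hsep hji.symm) hx _).trans (by norm_num [hη j])
  have hqa : ‖(1 - p) * a i‖ ≤ 4 * η := by
    rw [hq]
    refine (norm_cfc_mul_le (c := c i) (r := 1 / 4) (by norm_num) (by fun_prop)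
      (abs_one_sub_plateau_le_one _ _) (fun s hs => ?_) hx _).trans (by norm_num [hη i])
    rw [plateau_eq_one (by norm_num) hs.le, sub_self]
  have hsplit : p - a i = ∑ j ∈ Finset.univ.erase i, p * a j - (1 - p) * a i := by
    have hp : p = ∑ j, p * a j := by rw [← Finset.mul_sum, hsum, mul_one]
    nth_rewrite 1 [hp]
    rw [← Finset.sum_erase_add _ _ (Finset.mem_univ i), sub_mul, one_mul]
    abel
  calc ‖p - a i‖ ≤ ∑ j ∈ Finset.univ.erase i, ‖p * a j‖ + ‖(1 - p) * a i‖ := by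
        rw [hsplit]; exact (norm_sub_le _ _).trans (add_le_add (norm_sum_le _ _) le_rfl)
    _ ≤ ∑ j ∈ Finset.univ.erase i, 4 * η + 4 * η :=
        add_le_add (Finset.sum_le_sum fun j hj => hpa j (Finset.ne_of_mem_erase hj)) hqa
    _ = Fintype.card ι * (4 * η) := by
        rw [Finset.sum_erase_add _ _ (Finset.mem_univ i), Finset.sum_const, nsmul_eq_mul,
          Finset.card_univ]

end FunctionalCalculus

theorem exists_orthogonal_projections_near {A : Type*} [CStarAlgebra A] {n : ℕ} {a : Fin n → A}
    {δ : ℝ} (hδ : 0 ≤ δ) (hsa : ∀ i, IsSelfAdjoint (a i))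
    (horth : ∀ i j, i ≠ j → ‖a i * a j‖ ≤ δ) (hsum : ∑ i, a i = 1) (hsmall : 8 * n ^ 3 * δ < 1) :
    ∃ p : Fin n → A, (∀ i, IsSelfAdjoint (p i) ∧ p i * p i = p i) ∧
      (∀ i j, i ≠ j → p i * p j = 0) ∧ (∑ i, p i = 1) ∧ ∀ i, ‖p i - a i‖ ≤ 4 * n ^ 3 * δ := by
  set c : Fin n → ℝ := fun i => (i : ℕ)
  set x : A := ∑ i, c i • a i
  have hx : IsSelfAdjoint x :=
    isSelfAdjoint_sum _ fun i _ => (IsSelfAdjoint.all (c i)).smul (hsa i)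
  have hsep : ∀ i j, i ≠ j → 1 ≤ |c i - c j| := fun i j hij =>
    one_le_abs_natCast_sub_natCast (Fin.val_ne_of_ne hij)
  have hη : ∀ j, ‖(x - algebraMap ℝ A (c j)) * a j‖ ≤ n ^ 2 * δ := fun j => by
    calc _ ≤ ∑ i, |c i - c j| * δ := norm_sum_smul_sub_algebraMap_mul_le hsum horth c j
      _ ≤ ∑ _i : Fin n, n * δ := Finset.sum_le_sum fun i _ => mul_le_mul_of_nonneg_right
          (abs_natCast_sub_natCast_le i.isLt.le j.isLt.le) hδ
      _ = n ^ 2 * δ := by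
        rw [Finset.sum_const, Finset.card_univ, Fintype.card_fin, nsmul_eq_mul]
        ring
  have hspec : ∀ t ∈ spectrum ℝ x, ∃ k, |t - c k| < 1 / 4 := fun t ht => by
    refine exists_abs_sub_lt_of_mem_spectrum hsum hx hη (by norm_num) ?_ ht
    rw [Fintype.card_fin]
    linarith [show (n : ℝ) * (n ^ 2 * δ) = n ^ 3 * δ by ring]
  refine ⟨fun i => cfc (plateau (c i) (1 / 4)) x,
    fun i => ⟨cfc_predicate _ x, cfc_plateau_mul_self hsep hspec i⟩,
    fun i j hij => cfc_plateau_mul_cfc_plateau hsep hspec hij, sum_cfc_plateau hsep hspec hx,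
    fun i => (norm_cfc_plateau_sub_le hsep hsum hx hη i).trans_eq ?_⟩
  simp only [Fintype.card_fin]
  ring

/-- For every `n` and `ε > 0` there is `δ > 0` such that any `n` self-adjoint elements of
a matrix algebra which are `δ`-approximately idempotent, `δ`-approximately pairwise
orthogonal, and sum to `1`, can be perturbed within `ε` to pairwise orthogonal projections
summing to `1`. -/
theorem stmt8 :
    ∀ (n : ℕ) (ε : ℝ), 0 < ε → ∃ δ : ℝ, 0 < δ ∧
      ∀ (d : ℕ) (a : Fin n → MatAlg d),
        (∀ i, IsSelfAdjoint (a i)) →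
        (∀ i, ‖a i * a i - a i‖ < δ) →
        (∀ i j, i ≠ j → ‖a i * a j‖ < δ) →
        (∑ i, a i = 1) →
        ∃ p : Fin n → MatAlg d,
          (∀ i, IsSelfAdjoint (p i) ∧ p i * p i = p i) ∧
          (∀ i j, i ≠ j → p i * p j = 0) ∧
          (∑ i, p i = 1) ∧
          (∀ i, ‖p i - a i‖ < ε) := by
  intro n ε hε
  set m : ℝ := min (1 / 8) (ε / 4)
  have hm : 0 < m := lt_min (by norm_num) (by positivity)
  have hδ : (n : ℝ) ^ 3 * (m / (n ^ 3 + 1)) < m := by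
    rw [mul_div_assoc', div_lt_iff₀ (by positivity)]
    nlinarith
  refine ⟨m / (n ^ 3 + 1), by positivity, fun d a hsa _ horth hsum => ?_⟩
  obtain ⟨p, hp, hpp, hpsum, hpa⟩ := exists_orthogonal_projections_near (by positivity) hsa
    (fun i j hij => (horth i j hij).le) hsum (by linarith [min_le_left (1 / 8 : ℝ) (ε / 4)])
  refine ⟨p, hp, hpp, hpsum, fun i => (hpa i).trans_lt ?_⟩
  linarith [min_le_right (1 / 8 : ℝ) (ε / 4)]
end

section
/- Let X be a compact metrizable space with compatible metric d and let T : X → X be a homeomorphism. Then the ℤ-action generated by T is residually finite if and only if T is chain recurrent, i.e., every point x ∈ X admits, for every ε > 0, a finite sequence x = x₁, x₂, …, xₙ = x with n > 1 and d(T xᵢ, xᵢ₊₁) < ε for all i = 1, …, n−1. -/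
/-!
A periodic orbit of a finite model, read through `ζ`, is a periodic pseudo-orbit of `T` passing
near `x`; moving its endpoints to `x` gives an `ε`-chain from `x` to itself. Conversely, closing
`δ`-chains through the points of a finite `δ`-net gives cycles `ZMod n → X`, and their disjoint
union with the shift by one is a finite model: by uniform continuity of `T` and `T⁻¹`, a
pseudo-orbit with small enough steps stays `ε`-close to the true orbit for `|k| ≤ max |F|`.
-/

/-- The point `x` is chain recurrent for `T`: for every `ε > 0` there is an `ε`-chain
from `x` to itself. -/
def ChainRecurrentPt {X : Type*} [MetricSpace X] (T : X → X) (x : X) : Prop :=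
  ∀ ε : ℝ, 0 < ε → ∃ (n : ℕ) (c : ℕ → X), 0 < n ∧ c 0 = x ∧ c n = x ∧
    ∀ i < n, dist (T (c i)) (c (i + 1)) < ε

/-- Residual finiteness of the `ℤ`-action generated by a homeomorphism `T` of a compact
metric space: for every finite `F ⊆ ℤ` and `ε > 0` there are a finite set `E`, a bijection
`S` of `E`, and `ζ : E → X` with `ζ(E)` `ε`-dense and
`dist (ζ (Sᵏ z)) (Tᵏ (ζ z)) < ε` for all `z ∈ E`, `k ∈ F`. -/
def ZResFin {X : Type*} [MetricSpace X] (T : Equiv.Perm X) : Prop :=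
  ∀ (F : Finset ℤ) (ε : ℝ), 0 < ε →
    ∃ (E : Type) (_ : Fintype E) (S : Equiv.Perm E) (ζ : E → X),
      (∀ x : X, ∃ z : E, dist x (ζ z) < ε) ∧
      ∀ (z : E), ∀ k ∈ F, dist (ζ ((S ^ k) z)) ((T ^ k) (ζ z)) < ε

open Metric

section

variable {X : Type*} [MetricSpace X]

lemma exists_pos_forall_dist_iterate_lt [CompactSpace X] {f : X → X} (hf : Continuous f)
    (N : ℕ) {ε : ℝ} (hε : 0 < ε) :
    ∃ δ > 0, ∀ c : ℕ → X, (∀ i < N, dist (f (c i)) (c (i + 1)) < δ) →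
      ∀ k ≤ N, dist (c k) (f^[k] (c 0)) < ε := by
  induction N generalizing ε with
  | zero =>
    refine ⟨ε, hε, fun c _ k hk => ?_⟩
    simpa [Nat.le_zero.mp hk] using hε
  | succ N ih =>
    obtain ⟨η, hη, hfη⟩ := uniformContinuous_iff.mp
      (CompactSpace.uniformContinuous_of_continuous hf) (ε / 2) (by positivity)
    obtain ⟨δ, hδ, htrack⟩ := ih (lt_min hη (half_pos hε))
    refine ⟨min δ (ε / 2), by positivity, fun c hc k hk => ?_⟩
    have hcN : ∀ i < N, dist (f (c i)) (c (i + 1)) < δ := fun i hi =>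
      (hc i (hi.trans N.lt_succ_self)).trans_le (min_le_left _ _)
    rcases hk.lt_or_eq with hk | rfl
    · exact (htrack c hcN k (Nat.lt_succ_iff.mp hk)).trans_le
        ((min_le_right _ _).trans (half_le_self hε.le))
    · have hlast : dist (c (N + 1)) (f (c N)) < ε / 2 :=
        dist_comm (c (N + 1)) _ ▸ (hc N N.lt_succ_self).trans_le (min_le_right _ _)
      have hprev : dist (f (c N)) (f (f^[N] (c 0))) < ε / 2 :=
        hfη ((htrack c hcN N le_rfl).trans_le (min_le_left _ _))
      calc dist (c (N + 1)) (f^[N + 1] (c 0))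
          ≤ dist (c (N + 1)) (f (c N)) + dist (f (c N)) (f (f^[N] (c 0))) := by
            rw [Function.iterate_succ_apply']; exact dist_triangle _ _ _
        _ < ε / 2 + ε / 2 := add_lt_add hlast hprev
        _ = ε := add_halves ε

lemma exists_pos_forall_dist_zpow_lt [CompactSpace X] {T : Equiv.Perm X} (hT : Continuous T)
    (hT' : Continuous T.symm) (N : ℕ) {ε : ℝ} (hε : 0 < ε) :
    ∃ δ > 0, ∀ q : ℤ → X, (∀ a, dist (T (q a)) (q (a + 1)) < δ) →
      ∀ k : ℤ, k.natAbs ≤ N → dist (q k) ((T ^ k) (q 0)) < ε := by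
  obtain ⟨δ₁, hδ₁, htrack₁⟩ := exists_pos_forall_dist_iterate_lt hT N hε
  obtain ⟨δ₂, hδ₂, htrack₂⟩ := exists_pos_forall_dist_iterate_lt hT' N hε
  obtain ⟨δ₃, hδ₃, hT'δ₃⟩ := uniformContinuous_iff.mp
    (CompactSpace.uniformContinuous_of_continuous hT') δ₂ hδ₂
  refine ⟨min δ₁ δ₃, lt_min hδ₁ hδ₃, fun q hq k hk => ?_⟩
  obtain ⟨m, rfl | rfl⟩ := Int.eq_nat_or_neg k
  · have hforward : ∀ i < N, dist (T (q i)) (q ↑(i + 1)) < δ₁ := fun i _ => by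
      exact_mod_cast (hq i).trans_le (min_le_left _ _)
    simpa [← Equiv.Perm.iterate_eq_pow] using
      htrack₁ (fun i => q i) hforward m (by simpa using hk)
  · -- applying `T.symm` to a `δ₃`-step of `q` gives a `δ₂`-step backwards
    have hbackward : ∀ i < N, dist (T.symm (q (-i))) (q (-↑(i + 1))) < δ₂ := fun i _ => by
      have h := hq (-↑(i + 1))
      rw [show -((i + 1 : ℕ) : ℤ) + 1 = -i by push_cast; ring, dist_comm] at h
      simpa using hT'δ₃ (h.trans_le (min_le_right _ _))
    rw [zpow_neg, zpow_natCast, ← inv_pow, ← Equiv.Perm.iterate_eq_pow, Equiv.Perm.inv_def]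
    simpa using htrack₂ (fun i => q (-i)) hbackward m (by simpa using hk)

lemma exists_chain_of_periodic_chain {f : X → X} {δ : ℝ} {n : ℕ} {c : ℕ → X}
    (hc : ∀ i < n, dist (f (c i)) (c (i + 1)) < δ) (hper : c n = c 0) (x : X) :
    ∃ c' : ℕ → X, c' 0 = x ∧ c' n = x ∧
      ∀ i < n, dist (f (c' i)) (c' (i + 1)) < dist (f x) (f (c 0)) + δ + dist x (c 0) := by
  classical
  set c' : ℕ → X := fun i => if i = 0 ∨ i = n then x else c i
  have hc' : ∀ i, c' i = c i ∨ (c' i = x ∧ c i = c 0) := fun i => by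
    by_cases hi : i = 0 ∨ i = n
    · rcases hi with rfl | rfl <;> simp [c', hper]
    · simp [c', hi]
  refine ⟨c', by simp [c'], by simp [c'], fun i hi => ?_⟩
  have hstart : dist (f (c' i)) (f (c i)) ≤ dist (f x) (f (c 0)) := by
    rcases hc' i with h | ⟨h, h'⟩
    · simp [h]
    · rw [h, h']
  have hend : dist (c (i + 1)) (c' (i + 1)) ≤ dist x (c 0) := by
    rcases hc' (i + 1) with h | ⟨h, h'⟩
    · simp [h]
    · rw [h, h', dist_comm]
  calc dist (f (c' i)) (c' (i + 1))
      ≤ dist (f (c' i)) (f (c i)) + dist (f (c i)) (c (i + 1)) + dist (c (i + 1)) (c' (i + 1)) :=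
        dist_triangle4 _ _ _ _
    _ < _ := by linarith [hc i hi]

lemma chainRecurrentPt_of_zResFin [CompactSpace X] {T : Equiv.Perm X} (hT : Continuous T)
    (hRF : ZResFin T) (x : X) : ChainRecurrentPt T x := by
  intro ε hε
  obtain ⟨η, hη, hTη⟩ := uniformContinuous_iff.mp
    (CompactSpace.uniformContinuous_of_continuous hT) (ε / 3) (by positivity)
  obtain ⟨E, _, S, ζ, hdense, hS⟩ := hRF {1} (min η (ε / 3)) (by positivity)
  obtain ⟨z, hz⟩ := hdense x
  have hstep : ∀ i : ℕ, dist (T (ζ ((S ^ i) z))) (ζ ((S ^ (i + 1)) z)) < min η (ε / 3) :=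
    fun i => by simpa [pow_succ', dist_comm] using hS ((S ^ i) z) 1 (by simp)
  have hper : (S ^ orderOf S) z = (S ^ 0) z := by simp [pow_orderOf_eq_one]
  obtain ⟨c, hc0, hcn, hc⟩ :=
    exists_chain_of_periodic_chain (fun i _ => hstep i) (congrArg ζ hper) x
  refine ⟨orderOf S, c, orderOf_pos S, hc0, hcn, fun i hi => (hc i hi).trans_le ?_⟩
  have := hTη (hz.trans_le (min_le_left _ _))
  simp only [pow_zero, Equiv.Perm.one_apply]
  linarith [min_le_right η (ε / 3)]

-- Indexing by `ZMod (n j + 1)` rather than `ZMod (n j)` rules out the junk case `ZMod 0 = ℤ`.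
def HasDensePseudoCycles (f : X → X) (δ : ℝ) : Prop :=
  ∃ (ι : Type) (_ : Fintype ι) (n : ι → ℕ) (q : ∀ j, ZMod (n j + 1) → X),
    (∀ x, ∃ j i, dist x (q j i) < δ) ∧ ∀ j i, dist (f (q j i)) (q j (i + 1)) < δ

lemma ChainRecurrentPt.exists_pseudoCycle {f : X → X} {x : X} (hx : ChainRecurrentPt f x)
    {δ : ℝ} (hδ : 0 < δ) :
    ∃ (n : ℕ) (q : ZMod (n + 1) → X), q 0 = x ∧ ∀ i, dist (f (q i)) (q (i + 1)) < δ := by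
  obtain ⟨_ | n, c, hn, hc0, hcn, hc⟩ := hx δ hδ
  · exact absurd hn (lt_irrefl 0)
  refine ⟨n, fun i => c i.val, by simpa using hc0, fun i => ?_⟩
  have hval : (i + 1).val = (i.val + 1) % (n + 1) := by
    rw [ZMod.val_add, ZMod.val_one_eq_one_mod, Nat.add_mod_mod]
  show dist (f (c i.val)) (c (i + 1).val) < δ
  obtain hlt | heq : i.val + 1 < n + 1 ∨ i.val + 1 = n + 1 := by have := ZMod.val_lt i; omega
  · rw [hval, Nat.mod_eq_of_lt hlt]
    exact hc _ (ZMod.val_lt i)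
  · rw [hval, heq, Nat.mod_self, hc0, ← hcn]
    simpa only [heq] using hc _ (ZMod.val_lt i)

lemma hasDensePseudoCycles_of_chainRecurrent [CompactSpace X] {f : X → X}
    (hf : ∀ x, ChainRecurrentPt f x) {δ : ℝ} (hδ : 0 < δ) : HasDensePseudoCycles f δ := by
  obtain ⟨t, -, ht⟩ := (isCompact_univ (X := X)).elim_nhds_subcover (fun x => ball x δ)
    (fun x _ => ball_mem_nhds x hδ)
  choose n q hq0 hq using fun j : Fin t.card => (hf (t.equivFin.symm j)).exists_pseudoCycle hδ
  refine ⟨Fin t.card, inferInstance, n, q, fun x => ?_, hq⟩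
  obtain ⟨y, hy, hxy⟩ := Set.mem_iUnion₂.mp (ht (Set.mem_univ x))
  exact ⟨t.equivFin ⟨y, hy⟩, 0, by simpa [hq0] using hxy⟩

lemma zResFin_of_hasDensePseudoCycles [CompactSpace X] {T : Equiv.Perm X} (hT : Continuous T)
    (hT' : Continuous T.symm) (h : ∀ δ > 0, HasDensePseudoCycles T δ) : ZResFin T := by
  intro F ε hε
  obtain ⟨δ, hδ, htrack⟩ := exists_pos_forall_dist_zpow_lt hT hT' (F.sup Int.natAbs) hε
  obtain ⟨ι, _, n, q, hdense, hq⟩ := h (min δ ε) (lt_min hδ hε)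
  refine ⟨Σ j, ZMod (n j + 1), inferInstance,
    Equiv.Perm.sigmaCongrRightHom _ fun _ => Equiv.addRight 1, fun z => q z.1 z.2,
    fun x => ?_, fun ⟨j, i⟩ k hk => ?_⟩
  · obtain ⟨j, i, hx⟩ := hdense x
    exact ⟨⟨j, i⟩, hx.trans_le (min_le_right _ _)⟩
  · have hstep : ∀ a : ℤ, dist (T (q j (i + a))) (q j (i + ↑(a + 1))) < δ := fun a => by
      simpa [add_assoc] using (hq j (i + a)).trans_le (min_le_left _ _)
    rw [← map_zpow]
    change dist (q j ((Equiv.addRight (1 : ZMod (n j + 1)) ^ k) i)) _ < ε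
    simpa using htrack (fun a => q j (i + a)) hstep k (Finset.le_sup hk)

end

/-- For a homeomorphism `T` of a compact metrizable space, the `ℤ`-action generated by
`T` is residually finite if and only if `T` is chain recurrent. -/
theorem stmt10 {X : Type*} [MetricSpace X] [CompactSpace X]
    (T : Equiv.Perm X) (hT : Continuous T) (hT' : Continuous T.symm) :
    ZResFin T ↔ ∀ x : X, ChainRecurrentPt T x :=
  ⟨fun h => chainRecurrentPt_of_zResFin hT h, fun h =>
    zResFin_of_hasDensePseudoCycles hT hT' fun _ => hasDensePseudoCycles_of_chainRecurrent h⟩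
end

section
/- Let (X, T) be a metrizable ℤ-system with a point x whose orbit {Tᵏx : k ∈ ℤ} is dense in X, and let d be a compatible metric. Then the following are equivalent: (1) the system is chain recurrent; (2) the closures of the forward orbit {Tᵏ x : k ≥ 0} and the backward orbit {Tᵏ x : k < 0} intersect; (3) for every ε > 0 and N ∈ ℕ there exist integers m, n ≥ N with d(Tⁿ x, T⁻ᵐ x) < ε; (4) for every ε > 0 there exist m, n ∈ ℕ with d(Tⁿ x, T⁻ᵐ x) < ε. -/
/-!
(1) ⇒ (2): if the closures `F`, `B` of the forward and backward half-orbits of `x` were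
disjoint, they would be at positive distance `ε`, cover `X` (the orbit is dense), and `T F ⊆ F`;
so an `ε`-chain starting at `T⁻¹x` never leaves `F` after its first step, which lands near
`x ∈ F`, and cannot return to `T⁻¹x ∈ B`.

(2) ⇒ (3): a point `y ∈ F ∩ B` is an orbit point or lies in `ω(x)`, and an orbit point or lies
in `α(x)`; both limit sets are invariant. If `y ∈ ω(x) ∩ α(x)` it lies in the closures of all
half-orbits; if an orbit point lies in `α(x)` (resp. `ω(x)`), so does `Tᴺx` (resp. `T⁻ᴺx`); if
`y` is an orbit point on both sides, `x` is periodic.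

(3) ⇒ (1): pick `Tᵏx` near `y`, follow the orbit forward from `Tᵏ⁺¹x` to `Tⁿx`, jump back to
`T⁻ᵐx`, and follow the orbit forward again to `Tᵏx`, which is close to `y`.

(4) ⇒ (2): disjoint compact sets are at positive distance.
-/

open Set Relation

theorem Relation.transGen_iff_exists_seq {α : Type*} {r : α → α → Prop} {a b : α} :
    TransGen r a b ↔ ∃ (n : ℕ) (c : ℕ → α), 0 < n ∧ c 0 = a ∧ c n = b ∧
      ∀ i < n, r (c i) (c (i + 1)) := by
  constructor
  · intro h
    induction h with
    | @single b hab =>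
      exact ⟨1, Function.update (fun _ => b) 0 a, one_pos, by simp, by simp, by simpa using hab⟩
    | @tail b c' _ hbc ih =>
      obtain ⟨n, c, hn, h0, hn', hc⟩ := ih
      refine ⟨n + 1, Function.update c (n + 1) c', n.succ_pos, by simpa using h0, by simp, ?_⟩
      intro i hi
      rcases Nat.lt_succ_iff_lt_or_eq.mp hi with hi | rfl
      · simpa [Function.update_of_ne (show i ≠ n + 1 by omega),
          Function.update_of_ne (show i + 1 ≠ n + 1 by omega)] using hc i hi
      · simpa [hn'] using hbc
  · rintro ⟨n, c, hn, rfl, rfl, hc⟩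
    induction n with
    | zero => omega
    | succ n ih =>
      rcases Nat.eq_zero_or_pos n with rfl | hn
      · exact .single (hc 0 one_pos)
      · exact .tail (ih hn fun i hi => hc i (by omega)) (hc n n.lt_succ_self)

theorem chainRecurrentPt_iff_transGen {X : Type*} [MetricSpace X] {T : X → X} {y : X} :
    ChainRecurrentPt T y ↔ ∀ ε > 0, TransGen (fun a b => dist (T a) b < ε) y y :=
  forall₂_congr fun ε _ => (transGen_iff_exists_seq (r := fun a b => dist (T a) b < ε)).symm

theorem mem_closure_image_of_finite_sdiff {ι X : Type*} [TopologicalSpace X] [T1Space X]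
    {f : ι → X} {s t : Set ι} (hst : (s \ t).Finite) {y : X}
    (hy : y ∈ closure (f '' s)) (hys : y ∉ f '' s) : y ∈ closure (f '' t) := by
  have hsub : closure (f '' s) ⊆ f '' (s \ t) ∪ closure (f '' t) := by
    refine closure_minimal ?_ ((hst.image f).isClosed.union isClosed_closure)
    rintro _ ⟨k, hk, rfl⟩
    by_cases hkt : k ∈ t
    · exact Or.inr (subset_closure ⟨k, hkt, rfl⟩)
    · exact Or.inl ⟨k, ⟨hk, hkt⟩, rfl⟩
  exact (hsub hy).resolve_left fun ⟨k, hk, hky⟩ => hys ⟨k, hk.1, hky⟩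

theorem IsCompact.inter_nonempty_of_forall_exists_dist_lt {X : Type*} [MetricSpace X]
    {s t : Set X} (hs : IsCompact s) (ht : IsClosed t)
    (h : ∀ ε > 0, ∃ a ∈ s, ∃ b ∈ t, dist a b < ε) : (s ∩ t).Nonempty := by
  by_contra hst
  obtain ⟨r, hr, hsep⟩ :=
    Metric.exists_pos_forall_lt_edist hs ht
      (disjoint_iff_inter_eq_empty.mpr (not_nonempty_iff_eq_empty.mp hst))
  obtain ⟨a, ha, b, hb, hab⟩ := h r hr
  have hrab := hsep a ha b hb
  rw [edist_dist, ← ENNReal.ofReal_coe_nnreal] at hrab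
  exact (hrab.trans_le (ENNReal.ofReal_le_ofReal hab.le)).false

namespace Equiv.Perm

variable {X : Type*}

theorem zpow_one_add_apply (T : Perm X) (k : ℤ) (y : X) : (T ^ (1 + k)) y = T ((T ^ k) y) := by
  rw [zpow_one_add, mul_apply]

theorem continuous_zpow [TopologicalSpace X] {T : Perm X}
    (hT : Continuous T) (hT' : Continuous T.symm) : ∀ k : ℤ, Continuous ⇑(T ^ k)
  | (n : ℕ) => by simpa [coe_pow] using hT.iterate n
  | .negSucc n => by
    rw [zpow_negSucc, ← inv_pow, coe_pow]
    exact hT'.iterate (n + 1)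

end Equiv.Perm

namespace TransitiveSystem

open Equiv Perm

variable {X : Type*}

theorem mem_image_Ici_inter_image_Iic_of_zpow_apply_eq_self {T : Perm X} {x : X} {d : ℤ}
    (hd : 0 < d) (hdx : (T ^ d) x = x) (a b : ℤ) :
    x ∈ (fun k : ℤ => (T ^ k) x) '' Ici a ∩ (fun k : ℤ => (T ^ k) x) '' Iic b := by
  have hper : ∀ t : ℤ, (T ^ (t * d)) x = x := fun t => by
    rw [mul_comm, zpow_mul]; exact zpow_apply_eq_self_of_apply_eq_self hdx t
  exact ⟨⟨a.natAbs * d, mem_Ici.mpr (by nlinarith [le_abs_self a, Int.natCast_natAbs a]), hper _⟩,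
    ⟨-b.natAbs * d, mem_Iic.mpr (by nlinarith [neg_abs_le b, Int.natCast_natAbs b]), hper _⟩⟩

section Metric

variable [MetricSpace X] {T : Perm X} {x : X}

theorem reflTransGen_zpow_apply {ε : ℝ} (hε : 0 < ε) {j k : ℤ} (hjk : j ≤ k) :
    ReflTransGen (fun a b => dist (T a) b < ε) ((T ^ j) x) ((T ^ k) x) := by
  induction k, hjk using Int.leInduction with
  | base => exact .refl
  | succ k _ ih => exact ih.tail (by rw [add_comm, zpow_one_add_apply, dist_self]; exact hε)

theorem chainRecurrentPt_of_forall_exists_dist_lt (hT : Continuous T)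
    (hx : Dense (range fun k : ℤ => (T ^ k) x))
    (h : ∀ ε : ℝ, 0 < ε → ∀ N : ℕ, ∃ m n : ℕ, N ≤ m ∧ N ≤ n ∧
      dist ((T ^ (n : ℤ)) x) ((T ^ (-(m : ℤ))) x) < ε) (y : X) :
    ChainRecurrentPt T y := by
  rw [chainRecurrentPt_iff_transGen]
  intro ε hε
  obtain ⟨δ, hδ, hTδ⟩ := Metric.continuous_iff.mp hT y ε hε
  obtain ⟨_, ⟨k, rfl⟩, hk⟩ := hx.exists_dist_lt y (lt_min hδ hε)
  obtain ⟨m, n, hm, hn, hmn⟩ := h ε hε (k.natAbs + 2)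
  -- y → T^(k+1) x →* T^(n-1) x → T^(-m) x →* T^(k-1) x → y
  have hfirst : dist (T y) ((T ^ (1 + k)) x) < ε := by
    rw [zpow_one_add_apply, dist_comm]
    exact hTδ _ (((dist_comm _ _).trans_lt hk).trans_le (min_le_left _ _))
  have hjump : dist (T ((T ^ ((n : ℤ) - 1)) x)) ((T ^ (-(m : ℤ))) x) < ε := by
    rwa [← zpow_one_add_apply, add_sub_cancel]
  have hlast : dist (T ((T ^ (k - 1)) x)) y < ε := by
    rw [← zpow_one_add_apply, add_sub_cancel, dist_comm]
    exact hk.trans_le (min_le_right _ _)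
  exact .head' hfirst ((((reflTransGen_zpow_apply hε (by omega)).tail hjump).trans
    (reflTransGen_zpow_apply hε (by omega))).tail hlast)

theorem closure_inter_nonempty_of_chainRecurrentPt [CompactSpace X] (hT : Continuous T)
    (hx : Dense (range fun k : ℤ => (T ^ k) x)) (h : ∀ y : X, ChainRecurrentPt T y) :
    (closure ((fun k : ℤ => (T ^ k) x) '' Ici 0) ∩
      closure ((fun k : ℤ => (T ^ k) x) '' Iio 0)).Nonempty := by
  set F := closure ((fun k : ℤ => (T ^ k) x) '' Ici 0)
  set B := closure ((fun k : ℤ => (T ^ k) x) '' Iio 0)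
  refine isClosed_closure.isCompact.inter_nonempty_of_forall_exists_dist_lt isClosed_closure ?_
  intro ε hε
  by_contra! hsep
  have hcover : F ∪ B = univ := by
    rw [← closure_union, ← image_union, Ici_union_Iio, image_univ, hx.closure_eq]
  have hTF : MapsTo T F F := by
    refine MapsTo.closure ?_ hT
    rintro _ ⟨k, hk, rfl⟩
    exact ⟨1 + k, mem_Ici.mpr (by rw [mem_Ici] at hk; omega), zpow_one_add_apply T k x⟩
  have hstep : ∀ a b, T a ∈ F → dist (T a) b < ε → b ∈ F := fun a b ha hab =>
    (hcover ▸ mem_univ b : b ∈ F ∪ B).resolve_right fun hb => (hsep _ ha b hb).not_gt hab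
  have hx₀ : T ((T ^ (-1 : ℤ)) x) ∈ F := by
    rw [← zpow_one_add_apply, add_neg_cancel, zpow_zero]
    exact subset_closure ⟨0, mem_Ici.mpr le_rfl, rfl⟩
  have hreach : ∀ c, TransGen (fun a b => dist (T a) b < ε) ((T ^ (-1 : ℤ)) x) c → c ∈ F := by
    intro c hc
    induction hc with
    | single hr => exact hstep _ _ hx₀ hr
    | tail _ hr ih => exact hstep _ _ (hTF ih) hr
  have hmemF : (T ^ (-1 : ℤ)) x ∈ F :=
    hreach _ (chainRecurrentPt_iff_transGen.mp (h _) ε hε)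
  have hmemB : (T ^ (-1 : ℤ)) x ∈ B := subset_closure ⟨-1, by simp, rfl⟩
  exact (hsep _ hmemF _ hmemB).not_gt (by simpa using hε)

theorem closure_inter_nonempty_of_forall_exists_dist_lt [CompactSpace X]
    (h : ∀ ε : ℝ, 0 < ε → ∃ m n : ℕ, 1 ≤ m ∧ 1 ≤ n ∧
      dist ((T ^ (n : ℤ)) x) ((T ^ (-(m : ℤ))) x) < ε) :
    (closure ((fun k : ℤ => (T ^ k) x) '' Ici 0) ∩
      closure ((fun k : ℤ => (T ^ k) x) '' Iio 0)).Nonempty := by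
  refine isClosed_closure.isCompact.inter_nonempty_of_forall_exists_dist_lt isClosed_closure ?_
  intro ε hε
  obtain ⟨m, n, hm, -, hmn⟩ := h ε hε
  exact ⟨_, subset_closure ⟨n, mem_Ici.mpr (by positivity), rfl⟩,
    _, subset_closure ⟨-m, mem_Iio.mpr (by omega), rfl⟩, hmn⟩

theorem exists_dist_lt_of_closure_inter_nonempty {N : ℕ}
    (hN : (closure ((fun k : ℤ => (T ^ k) x) '' Ici (N : ℤ)) ∩
      closure ((fun k : ℤ => (T ^ k) x) '' Iic (-(N : ℤ)))).Nonempty) {ε : ℝ} (hε : 0 < ε) :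
    ∃ m n : ℕ, N ≤ m ∧ N ≤ n ∧ dist ((T ^ (n : ℤ)) x) ((T ^ (-(m : ℤ))) x) < ε := by
  obtain ⟨z, hzF, hzB⟩ := hN
  obtain ⟨_, ⟨n, hn, rfl⟩, hnz⟩ := Metric.mem_closure_iff.mp hzF (ε / 2) (half_pos hε)
  obtain ⟨_, ⟨l, hl, rfl⟩, hlz⟩ := Metric.mem_closure_iff.mp hzB (ε / 2) (half_pos hε)
  rw [mem_Ici] at hn
  rw [mem_Iic] at hl
  lift n to ℕ using by omega
  obtain ⟨m, rfl⟩ := Int.exists_eq_neg_ofNat (by omega : l ≤ 0)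
  refine ⟨m, n, by omega, by omega, ?_⟩
  calc dist ((T ^ (n : ℤ)) x) ((T ^ (-(m : ℤ))) x)
      ≤ dist ((T ^ (n : ℤ)) x) z + dist z ((T ^ (-(m : ℤ))) x) := dist_triangle _ _ _
    _ < ε / 2 + ε / 2 := by rw [dist_comm] at hnz; exact add_lt_add hnz hlz
    _ = ε := add_halves ε

end Metric

section LimitSets

variable [TopologicalSpace X] (T : Perm X) (x : X)

def omegaLimitSet : Set X := ⋂ a : ℤ, closure ((fun k : ℤ => (T ^ k) x) '' Ici a)

def alphaLimitSet : Set X := ⋂ a : ℤ, closure ((fun k : ℤ => (T ^ k) x) '' Iic a)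

variable {T x}

theorem mapsTo_closure_image_zpow (hT : Continuous T) (hT' : Continuous T.symm) (j : ℤ)
    {s t : Set ℤ} (hst : ∀ k ∈ s, j + k ∈ t) :
    MapsTo (T ^ j) (closure ((fun k : ℤ => (T ^ k) x) '' s))
      (closure ((fun k : ℤ => (T ^ k) x) '' t)) := by
  refine MapsTo.closure ?_ (continuous_zpow hT hT' j)
  rintro _ ⟨k, hk, rfl⟩
  exact ⟨j + k, hst k hk, by simp only [zpow_add, mul_apply]⟩

theorem zpow_apply_mem_omegaLimitSet (hT : Continuous T) (hT' : Continuous T.symm)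
    {z : X} (hz : z ∈ omegaLimitSet T x) (j : ℤ) : (T ^ j) z ∈ omegaLimitSet T x :=
  mem_iInter.mpr fun a => mapsTo_closure_image_zpow hT hT' j (s := Ici (a - j))
    (fun k hk => by rw [mem_Ici] at hk ⊢; omega) (mem_iInter.mp hz _)

theorem zpow_apply_mem_alphaLimitSet (hT : Continuous T) (hT' : Continuous T.symm)
    {z : X} (hz : z ∈ alphaLimitSet T x) (j : ℤ) : (T ^ j) z ∈ alphaLimitSet T x :=
  mem_iInter.mpr fun a => mapsTo_closure_image_zpow hT hT' j (s := Iic (a - j))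
    (fun k hk => by rw [mem_Iic] at hk ⊢; omega) (mem_iInter.mp hz _)

theorem mem_image_or_mem_omegaLimitSet [T1Space X] {a : ℤ} {y : X}
    (hy : y ∈ closure ((fun k : ℤ => (T ^ k) x) '' Ici a)) :
    y ∈ (fun k : ℤ => (T ^ k) x) '' Ici a ∨ y ∈ omegaLimitSet T x :=
  or_iff_not_imp_left.mpr fun hys => mem_iInter.mpr fun b =>
    mem_closure_image_of_finite_sdiff (by rw [Ici_sdiff_Ici]; exact finite_Ico a b) hy hys

theorem mem_image_or_mem_alphaLimitSet [T1Space X] {a : ℤ} {y : X}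
    (hy : y ∈ closure ((fun k : ℤ => (T ^ k) x) '' Iio a)) :
    y ∈ (fun k : ℤ => (T ^ k) x) '' Iio a ∨ y ∈ alphaLimitSet T x :=
  or_iff_not_imp_left.mpr fun hys => mem_iInter.mpr fun b =>
    mem_closure_image_of_finite_sdiff (by rw [Iio_sdiff_Iic]; exact finite_Ioo b a) hy hys

theorem closure_image_Ici_inter_Iic_nonempty [T1Space X]
    (hT : Continuous T) (hT' : Continuous T.symm)
    (h : (closure ((fun k : ℤ => (T ^ k) x) '' Ici 0) ∩
      closure ((fun k : ℤ => (T ^ k) x) '' Iio 0)).Nonempty) (a b : ℤ) :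
    (closure ((fun k : ℤ => (T ^ k) x) '' Ici a) ∩
      closure ((fun k : ℤ => (T ^ k) x) '' Iic b)).Nonempty := by
  obtain ⟨y, hyF, hyB⟩ := h
  have hω : omegaLimitSet T x ⊆ closure ((fun k : ℤ => (T ^ k) x) '' Ici a) := iInter_subset _ a
  have hα : alphaLimitSet T x ⊆ closure ((fun k : ℤ => (T ^ k) x) '' Iic b) := iInter_subset _ b
  have hshift : ∀ p q : ℤ, (T ^ (q - p)) ((T ^ p) x) = (T ^ q) x := fun p q => by
    rw [← mul_apply, ← zpow_add, sub_add_cancel]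
  rcases mem_image_or_mem_omegaLimitSet hyF with ⟨p, hp, rfl⟩ | hyω <;>
    rcases mem_image_or_mem_alphaLimitSet hyB with ⟨q, hq, hqp⟩ | hyα
  · rw [mem_Ici] at hp
    rw [mem_Iio] at hq
    have hper : (T ^ (p - q)) x = x := (T ^ q).injective <| by
      rw [← mul_apply, ← zpow_add, add_sub_cancel]; exact hqp.symm
    obtain ⟨hxa, hxb⟩ := mem_image_Ici_inter_image_Iic_of_zpow_apply_eq_self
      (by omega : 0 < p - q) hper a b
    exact ⟨x, subset_closure hxa, subset_closure hxb⟩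
  · refine ⟨(T ^ a) x, subset_closure ⟨a, mem_Ici.mpr le_rfl, rfl⟩, hα ?_⟩
    simpa only [hshift] using zpow_apply_mem_alphaLimitSet hT hT' hyα (a - p)
  · refine ⟨(T ^ b) x, hω ?_, subset_closure ⟨b, mem_Iic.mpr le_rfl, rfl⟩⟩
    rw [← hqp] at hyω
    simpa only [hshift] using zpow_apply_mem_omegaLimitSet hT hT' hyω (b - q)
  · exact ⟨y, hω hyω, hα hyα⟩

end LimitSets

theorem forall_exists_dist_lt_of_closure_inter_nonempty [MetricSpace X] {T : Perm X} {x : X}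
    (hT : Continuous T) (hT' : Continuous T.symm)
    (h : (closure ((fun k : ℤ => (T ^ k) x) '' Ici 0) ∩
      closure ((fun k : ℤ => (T ^ k) x) '' Iio 0)).Nonempty) :
    ∀ ε : ℝ, 0 < ε → ∀ N : ℕ, ∃ m n : ℕ, N ≤ m ∧ N ≤ n ∧
      dist ((T ^ (n : ℤ)) x) ((T ^ (-(m : ℤ))) x) < ε := fun _ hε N =>
  exists_dist_lt_of_closure_inter_nonempty
    (closure_image_Ici_inter_Iic_nonempty hT hT' h N (-N)) hε

end TransitiveSystem

open TransitiveSystem in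
/-- For a transitive metrizable `ℤ`-system `(X, T)` with dense orbit point `x`, the
following are equivalent: (1) the system is chain recurrent; (2) the closures of the
forward and backward orbits of `x` intersect; (3) for every `ε > 0` and `N` there are
`m, n ≥ N` with `d(Tⁿx, T⁻ᵐx) < ε`; (4) for every `ε > 0` there are `m, n ≥ 1` with
`d(Tⁿx, T⁻ᵐx) < ε`. -/
theorem stmt11 {X : Type*} [MetricSpace X] [CompactSpace X]
    (T : Equiv.Perm X) (hT : Continuous T) (hT' : Continuous T.symm)
    (x : X) (hx : Dense (Set.range fun k : ℤ => (T ^ k) x)) :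
    ((∀ y : X, ChainRecurrentPt T y) ↔
        (closure {y : X | ∃ k : ℤ, 0 ≤ k ∧ (T ^ k) x = y} ∩
          closure {y : X | ∃ k : ℤ, k < 0 ∧ (T ^ k) x = y}).Nonempty) ∧
    ((closure {y : X | ∃ k : ℤ, 0 ≤ k ∧ (T ^ k) x = y} ∩
          closure {y : X | ∃ k : ℤ, k < 0 ∧ (T ^ k) x = y}).Nonempty ↔
        ∀ ε : ℝ, 0 < ε → ∀ N : ℕ, ∃ m n : ℕ, N ≤ m ∧ N ≤ n ∧
          dist ((T ^ (n : ℤ)) x) ((T ^ (-(m : ℤ))) x) < ε) ∧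
    ((∀ ε : ℝ, 0 < ε → ∀ N : ℕ, ∃ m n : ℕ, N ≤ m ∧ N ≤ n ∧
          dist ((T ^ (n : ℤ)) x) ((T ^ (-(m : ℤ))) x) < ε) ↔
        ∀ ε : ℝ, 0 < ε → ∃ m n : ℕ, 1 ≤ m ∧ 1 ≤ n ∧
          dist ((T ^ (n : ℤ)) x) ((T ^ (-(m : ℤ))) x) < ε) := by
  have h12 := closure_inter_nonempty_of_chainRecurrentPt hT hx
  have h23 := forall_exists_dist_lt_of_closure_inter_nonempty (x := x) hT hT'
  have h31 := chainRecurrentPt_of_forall_exists_dist_lt hT hx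
  have h42 := closure_inter_nonempty_of_forall_exists_dist_lt (T := T) (x := x)
  exact ⟨⟨h12, fun h => h31 (h23 h)⟩, ⟨h23, fun h => h12 (h31 h)⟩,
    ⟨fun h ε hε => h ε hε 1, fun h => h23 (h42 h)⟩⟩
end

section
/- Suppose G is a countable group admitting a free residually finite continuous action on a compact Hausdorff space X (that is, sx = x for some x ∈ X implies s = e). Then G is a residually finite group. -/
theorem exists_monoidHom_to_finite_ne_one_of_smul_ne {G : Type*} {E : Type} [Group G]
    [MulAction G E] [Finite E] {g : G} {z : E} (hz : g • z ≠ z) :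
    ∃ (H : Type) (_ : Group H) (_ : Fintype H) (π : G →* H), π g ≠ 1 := by
  classical
  have := Fintype.ofFinite E
  refine ⟨Equiv.Perm E, inferInstance, inferInstance, MulAction.toPermHom G E, fun hg => hz ?_⟩
  simpa using congrArg (· z) hg

theorem exists_monoidHom_to_finite_ne_one_of_apply_ne {G : Type*} {E : Type} [Group G] [Finite E]
    (σ : G → E → E) (hone : ∀ z, σ 1 z = z) (hmul : ∀ s t z, σ (s * t) z = σ s (σ t z))
    {g : G} {z : E} (hz : σ g z ≠ z) :
    ∃ (H : Type) (_ : Group H) (_ : Fintype H) (π : G →* H), π g ≠ 1 :=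
  letI : MulAction G E := { smul := σ, one_smul := hone, mul_smul := hmul }
  exists_monoidHom_to_finite_ne_one_of_smul_ne hz

theorem stmt15_general {G X : Type*} [Group G]
    [TopologicalSpace X] [T2Space X] [Nonempty X]
    (act : G → X → X)
    (hcont : ∀ s, Continuous (act s))
    (hfree : ∀ s x, act s x = x → s = 1)
    (hrf : IsRFAction act) :
    ∀ g : G, g ≠ 1 → ∃ (H : Type) (_ : Group H) (_ : Fintype H) (π : G →* H), π g ≠ 1 := by
  intro g hg
  -- Approximating `act g` within the complement of its graph forces the finite model to move
  -- every point.
  have hopen : IsOpen {p : X × X | act g p.1 ≠ p.2} :=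
    isOpen_ne_fun ((hcont g).comp continuous_fst) continuous_snd
  have hdiag : ∀ x : X, act g x ≠ x := fun x hx => hg (hfree g x hx)
  obtain ⟨E, _, σ, hone, hmul, ζ, hdense, happrox⟩ := hrf {g} _ hopen hdiag
  obtain ⟨z, -⟩ := hdense (Classical.arbitrary X)
  refine exists_monoidHom_to_finite_ne_one_of_apply_ne σ hone hmul (z := z) fun hz => ?_
  exact happrox z g (Finset.mem_singleton_self g) (by rw [hz])

/-- If a countable group `G` admits a free residually finite continuous action on a
(nonempty) compact Hausdorff space, then `G` is a residually finite group. -/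
theorem stmt15 {G X : Type*} [Group G] [Countable G]
    [TopologicalSpace X] [CompactSpace X] [T2Space X] [Nonempty X]
    (act : G → X → X)
    (hone : ∀ x, act 1 x = x)
    (hmul : ∀ s t x, act (s * t) x = act s (act t x))
    (hcont : ∀ s, Continuous (act s))
    (hfree : ∀ s x, act s x = x → s = 1)
    (hrf : IsRFAction act) :
    ∀ g : G, g ≠ 1 → ∃ (H : Type) (_ : Group H) (_ : Fintype H) (π : G →* H), π g ≠ 1 :=
  stmt15_general act hcont hfree hrf
end

section
/- Let X be a compact Hausdorff space, T : X → X a homeomorphism, and suppose there exists an open set U ⊆ X such that T(closure(U)) ⊆ U and U \ T(closure(U)) ≠ ∅. Then (X, T) is not chain recurrent: specifically, any point x ∈ U \ T(closure(U)) is not chain recurrent. -/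
/-! If `T` maps the open set `U` into a closed set `K ⊆ U` and `x ∈ U \ K`, take the
neighbourhood `ε = (Kᶜ × X) ∪ (X × (U \ {x}))` of the diagonal. A step of an `ε`-chain
starting in `U` lands in `T(U) ⊆ K`, so it must jump into `U \ {x}`; hence an `ε`-chain
from `x` never returns to `x`. For the theorem take `K = T(closure U)`, which is closed
because `T⁻¹` is continuous. -/

/-- The point `x` is chain recurrent for `T` on a topological space: for every open
neighbourhood `ε` of the diagonal there is an `ε`-chain from `x` to itself. -/
def ChainRecPt {X : Type*} [TopologicalSpace X] (T : X → X) (x : X) : Prop :=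
  ∀ ε : Set (X × X), IsOpen ε → (∀ y, (y, y) ∈ ε) →
    ∃ (n : ℕ) (c : ℕ → X), 0 < n ∧ c 0 = x ∧ c n = x ∧
      ∀ i < n, (T (c i), c (i + 1)) ∈ ε

open Set

theorem not_chainRecPt_of_mapsTo {X : Type*} [TopologicalSpace X] [T1Space X] {T : X → X}
    {U K : Set X} (hU : IsOpen U) (hK : IsClosed K) (hTUK : MapsTo T U K) (hKU : K ⊆ U)
    {x : X} (hxU : x ∈ U) (hxK : x ∉ K) : ¬ ChainRecPt T x := by
  intro hrec
  set ε : Set (X × X) := Kᶜ ×ˢ univ ∪ univ ×ˢ (U \ {x})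
  have hε : IsOpen ε :=
    (hK.isOpen_compl.prod isOpen_univ).union (isOpen_univ.prod (hU.sdiff isClosed_singleton))
  have hdiag : ∀ y, (y, y) ∈ ε := by
    intro y
    by_cases hy : y ∈ K
    · exact Or.inr ⟨trivial, hKU hy, fun hyx => hxK (hyx ▸ hy)⟩
    · exact Or.inl ⟨hy, trivial⟩
  obtain ⟨n, c, hn, hc0, hcn, hstep⟩ := hrec ε hε hdiag
  have hjump : ∀ i < n, c i ∈ U → c (i + 1) ∈ U \ {x} := by
    intro i hi hci
    rcases hstep i hi with ⟨hTc, -⟩ | ⟨-, hc⟩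
    · exact absurd (hTUK hci) hTc
    · exact hc
  have hstay : ∀ i, 1 ≤ i → i ≤ n → c i ∈ U \ {x} := by
    intro i hi
    induction i, hi using Nat.le_induction with
    | base => exact fun h1 => hjump 0 h1 (hc0 ▸ hxU)
    | succ k _ ih => exact fun hkn => hjump k hkn (ih (k.le_succ.trans hkn)).1
  exact (hstay n hn le_rfl).2 hcn

theorem stmt17_general {X : Type*} [TopologicalSpace X] [T2Space X]
    (T : Equiv.Perm X) (hT' : Continuous T.symm)
    (U : Set X) (hU : IsOpen U)
    (hTU : ⇑T '' closure U ⊆ U) :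
    ∀ x ∈ U \ ⇑T '' closure U, ¬ ChainRecPt T x := by
  rintro x ⟨hxU, hxK⟩
  have hK : IsClosed (⇑T '' closure U) := by
    rw [T.image_eq_preimage_symm]
    exact isClosed_closure.preimage hT'
  exact not_chainRecPt_of_mapsTo hU hK (fun y hy => mem_image_of_mem T (subset_closure hy))
    hTU hxU hxK

/-- If a homeomorphism `T` of a compact Hausdorff space compresses an open set `U`
(that is, `T(closure U) ⊆ U` and `U \ T(closure U) ≠ ∅`), then no point of
`U \ T(closure U)` is chain recurrent; in particular `(X, T)` is not chain recurrent. -/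
theorem stmt17 {X : Type*} [TopologicalSpace X] [CompactSpace X] [T2Space X]
    (T : Equiv.Perm X) (hT : Continuous T) (hT' : Continuous T.symm)
    (U : Set X) (hU : IsOpen U)
    (hTU : ⇑T '' closure U ⊆ U)
    (hne : (U \ ⇑T '' closure U).Nonempty) :
    ∀ x ∈ U \ ⇑T '' closure U, ¬ ChainRecPt T x :=
  stmt17_general T hT' U hU hTU
end

section
/- Let X be a compact metrizable space without isolated points, with compatible metric d, and let a continuous action of G on X be residually finite. Then for every finite F ⊆ G and ε > 0 there exist a finite subset E ⊆ X, an action of G on E (as an abstract set), such that E is ε-dense in X and d(s·z (action on E), s·z (action on X)) < ε for all z ∈ E and s ∈ F; that is, the finite models can be taken to be subsets of X with ζ the inclusion map. -/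
/-!
Take a finite model `ζ : E → X` for a tolerance `η ≤ ε / 3` that is also below a common
uniform-continuity modulus (for `ε / 3`) of the finitely many maps `act s`, `s ∈ F`, on the
compact space `X`. Since `X` has no isolated points, `ζ` can be moved by less than `η` to an
injective map, point by point, avoiding the finitely many values already chosen. Transporting
the action of `G` on `E` to the image of this map costs at most `η + η + ε / 3` in each estimate.
-/

open Topology

section Perturbation

variable {X : Type*} [TopologicalSpace X] [T1Space X]

lemma exists_mem_notMem_of_mem_nhds {x : X} [(𝓝[≠] x).NeBot] {U s : Set X} (hU : U ∈ 𝓝 x)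
    (hs : s.Finite) : ∃ y ∈ U, y ∉ s :=
  Filter.nonempty_of_mem <|
    nhdsNE_of_nhdsNE_sdiff_finite (mem_nhdsWithin_of_mem_nhds hU) hs

lemma exists_injective_forall_mem_nhds {E : Type*} [Finite E] (hX : ∀ x : X, (𝓝[≠] x).NeBot)
    (ζ : E → X) {U : E → Set X} (hU : ∀ z, U z ∈ 𝓝 (ζ z)) :
    ∃ ζ' : E → X, Function.Injective ζ' ∧ ∀ z, ζ' z ∈ U z := by
  classical
  have : Fintype E := Fintype.ofFinite E
  suffices h : ∀ s : Finset E, ∃ ζ' : E → X, Set.InjOn ζ' s ∧ ∀ z, ζ' z ∈ U z by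
    obtain ⟨ζ', hinj, hU'⟩ := h Finset.univ
    exact ⟨ζ', by simpa using hinj, hU'⟩
  intro s
  induction s using Finset.induction_on with
  | empty => exact ⟨ζ, by simp, fun z => mem_of_mem_nhds (hU z)⟩
  | @insert a s ha ih =>
    obtain ⟨ζ', hinj, hU'⟩ := ih
    have := hX (ζ a)
    obtain ⟨y, hyU, hy⟩ := exists_mem_notMem_of_mem_nhds (hU a) (s.finite_toSet.image ζ')
    have hagree : Set.EqOn (Function.update ζ' a y) ζ' s := fun z hz =>
      Function.update_of_ne (ne_of_mem_of_not_mem hz ha) _ _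
    refine ⟨Function.update ζ' a y, ?_, fun z => ?_⟩
    · rw [Finset.coe_insert, Set.injOn_insert (by simpa using ha), hagree.image_eq,
        Function.update_self]
      exact ⟨hinj.congr hagree.symm, hy⟩
    · rcases eq_or_ne z a with rfl | hz
      · simpa using hyU
      · simpa [hz] using hU' z

end Perturbation

lemma exists_pos_forall_dist_lt_of_continuous {X Y ι : Type*} [PseudoMetricSpace X]
    [CompactSpace X] [PseudoMetricSpace Y] (F : Finset ι) (f : ι → X → Y)
    (hf : ∀ i ∈ F, Continuous (f i)) {ε : ℝ} (hε : 0 < ε) :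
    ∃ δ > 0, ∀ x y, dist x y < δ → ∀ i ∈ F, dist (f i x) (f i y) < ε := by
  have hunif : ∀ i ∈ F, {p : X × X | dist (f i p.1) (f i p.2) < ε} ∈ uniformity X :=
    fun i hi => CompactSpace.uniformContinuous_of_continuous (hf i hi)
      (Metric.dist_mem_uniformity hε)
  obtain ⟨δ, hδ, h⟩ := Metric.mem_uniformity_dist.1 ((Filter.biInter_finset_mem F).2 hunif)
  exact ⟨δ, hδ, fun x y hxy i hi => Set.mem_iInter₂.1 (h hxy) i hi⟩

lemma Equiv.exists_conj_action {M E E' : Type*} [Monoid M] (e : E ≃ E') (σ : M → E → E)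
    (hone : ∀ z, σ 1 z = z) (hmul : ∀ s t z, σ (s * t) z = σ s (σ t z)) :
    ∃ σ' : M → E' → E', (∀ w, σ' 1 w = w) ∧ (∀ s t w, σ' (s * t) w = σ' s (σ' t w)) ∧
      ∀ s z, σ' s (e z) = e (σ s z) :=
  ⟨fun s w => e (σ s (e.symm w)), by simp [hone], by simp [hmul], by simp⟩

theorem stmt19_general {G X : Type*} [Group G] [MetricSpace X] [CompactSpace X]
    (hX : ∀ x : X, (𝓝[≠] x).NeBot)
    (act : G → X → X)
    (hcont : ∀ s, Continuous (act s))
    (hrf : IsRFAction act) :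
    ∀ (F : Finset G) (ε : ℝ), 0 < ε →
      ∃ (E : Finset X) (σ : G → E → E),
        (∀ z, σ 1 z = z) ∧ (∀ s t z, σ (s * t) z = σ s (σ t z)) ∧
        (∀ x : X, ∃ z ∈ E, dist x z < ε) ∧
        ∀ (z : E), ∀ s ∈ F, dist (↑(σ s z) : X) (act s (↑z : X)) < ε := by
  intro F ε hε
  obtain ⟨δ, hδ, hact⟩ :=
    exists_pos_forall_dist_lt_of_continuous F act (fun s _ => hcont s) (by positivity : 0 < ε / 3)
  set η := min (ε / 3) δ
  have hη : 0 < η := lt_min (by positivity) hδ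
  have hηε : η ≤ ε / 3 := min_le_left _ _
  obtain ⟨E, _, σ, hone, hmul, ζ, hdense, hζ⟩ := hrf F {p | dist p.1 p.2 < η}
    (isOpen_lt (by fun_prop) continuous_const) (fun x => by simpa using hη)
  obtain ⟨ζ', hinj, hζ'⟩ := exists_injective_forall_mem_nhds hX ζ
    (fun z => Metric.ball_mem_nhds (ζ z) hη)
  have hrange := Set.finite_range ζ'
  let e : E ≃ hrange.toFinset := (Equiv.ofInjective ζ' hinj).trans hrange.subtypeEquivToFinset
  obtain ⟨σ', hone', hmul', he⟩ := e.exists_conj_action σ hone hmul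
  refine ⟨hrange.toFinset, σ', hone', hmul', fun x => ?_, fun w s hs => ?_⟩
  · obtain ⟨z, hz⟩ := hdense x
    refine ⟨ζ' z, by simp, ?_⟩
    calc dist x (ζ' z) ≤ dist x (ζ z) + dist (ζ' z) (ζ z) := dist_triangle_right _ _ _
      _ < η + η := add_lt_add hz (hζ' z)
      _ < ε := by linarith
  · obtain ⟨z, rfl⟩ := e.surjective w
    rw [he]
    change dist (ζ' (σ s z)) (act s (ζ' z)) < ε
    calc dist (ζ' (σ s z)) (act s (ζ' z))
        ≤ dist (ζ' (σ s z)) (ζ (σ s z)) + dist (ζ (σ s z)) (act s (ζ z))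
          + dist (act s (ζ z)) (act s (ζ' z)) := dist_triangle4 _ _ _ _
      _ < η + η + ε / 3 := by
        gcongr
        · exact hζ' _
        · exact hζ z s hs
        · exact hact _ _ ((Metric.mem_ball'.1 (hζ' z)).trans_le (min_le_right _ _)) s hs
      _ ≤ ε := by linarith

/-- If `X` is a compact metrizable space without isolated points and the continuous
action of `G` on `X` is residually finite, then the finite models witnessing residual
finiteness can be taken to be finite subsets `E ⊆ X` with `ζ` the inclusion map: `E` is
`ε`-dense and the abstract `G`-action on `E` moves points `ε`-close to the action on `X`. -/
theorem stmt19 {G X : Type*} [Group G] [MetricSpace X] [CompactSpace X]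
    (hX : ∀ x : X, (𝓝[≠] x).NeBot)
    (act : G → X → X)
    (hone : ∀ x, act 1 x = x)
    (hmul : ∀ s t x, act (s * t) x = act s (act t x))
    (hcont : ∀ s, Continuous (act s))
    (hrf : IsRFAction act) :
    ∀ (F : Finset G) (ε : ℝ), 0 < ε →
      ∃ (E : Finset X) (σ : G → E → E),
        (∀ z, σ 1 z = z) ∧ (∀ s t z, σ (s * t) z = σ s (σ t z)) ∧
        (∀ x : X, ∃ z ∈ E, dist x z < ε) ∧
        ∀ (z : E), ∀ s ∈ F, dist (↑(σ s z) : X) (act s (↑z : X)) < ε :=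
  stmt19_general hX act hcont hrf
end
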